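/- arXiv:math/0402354 — 6 statements merged into one kernel-verified Lean document; each statement's English description precedes it below -/
import Mathlib

section
/- Let n be a positive integer and m = n(n+1)/2. Then there exists a real number Θ_n with 0 < Θ_n < 1 such that H_n = (1/2)·ln(2m) + γ + 1/(12m) − 1/(120m²) + 1/(630m³) − 1/(1680m⁴) + Θ_n/(2310m⁵). -/
set_option maxHeartbeats 2000000
set_option maxRecDepth 4000

open Real Filter Topology

noncomputable def Pc (m : ℝ) : ℝ := 1/(12*m) - 1/(120*m^2) + 1/(630*m^3) - 1/(1680*m^4)
noncomputable def Mv (n : ℕ) : ℝ := (n : ℝ) * ((n : ℝ) + 1) / 2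
noncomputable def Gs (n : ℕ) : ℝ := (harmonic n : ℝ) - Real.log (2 * Mv n) / 2 - Pc (Mv n)
noncomputable def Ws (n : ℕ) : ℝ := 1 / (2310 * (Mv n) ^ 5)

lemma rat_low (u : ℝ) (hu : 0 ≤ u) :
    0 < 1 / (3 * (u + 2) ^ 3) + 1 / (5 * (u + 2) ^ 5) + 1 / (7 * (u + 2) ^ 7) + 1 / (9 * (u + 2) ^ 9) + 1 / (11 * (u + 2) ^ 11) + 1 / (13 * (u + 2) ^ 13) + 1 / (15 * (u + 2) ^ 15) - 1 / (12 * ((u + 1) * (u + 2) / 2)) + 1 / (120 * ((u + 1) * (u + 2) / 2) ^ 2) - 1 / (630 * ((u + 1) * (u + 2) / 2) ^ 3) + 1 / (1680 * ((u + 1) * (u + 2) / 2) ^ 4) + 1 / (12 * ((u + 2) * (u + 3) / 2)) - 1 / (120 * ((u + 2) * (u + 3) / 2) ^ 2) + 1 / (630 * ((u + 2) * (u + 3) / 2) ^ 3) - 1 / (1680 * ((u + 2) * (u + 3) / 2) ^ 4) - 1 / ((u + 2) ^ 16 * (u + 1)) := by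
  have hD : (0:ℝ) < (45045 * (u + 2) ^ 16 * (u + 1) ^ 4 * (u + 3) ^ 4) := by positivity
  have hp : (0:ℝ) < 48190713 + 320474236 * u + 979096653 * u ^ 2 + 1817165846 * u ^ 3 + 2286602011 * u ^ 4 + 2063118360 * u ^ 5 + 1375654559 * u ^ 6 + 687300070 * u ^ 7 + 257497344 * u ^ 8 + 71470208 * u ^ 9 + 14285568 * u ^ 10 + 1947264 * u ^ 11 + 162240 * u ^ 12 + 6240 * u ^ 13 := by
    have h := pow_nonneg hu
    linarith [h 2, h 3, h 4, h 5, h 6, h 7, h 8, h 9, h 10, h 11, h 12, h 13]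
  have e0 : 1 / (3 * (u + 2) ^ 3) = (9963233280 + 117898260480 * u + 659233935360 * u ^ 2 + 2317097502720 * u ^ 3 + 5744688069120 * u ^ 4 + 10685348593920 * u ^ 5 + 15482072686080 * u ^ 6 + 17906640111360 * u ^ 7 + 16805525536800 * u ^ 8 + 12937334089680 * u ^ 9 + 8224108772880 * u ^ 10 + 4331085038280 * u ^ 11 + 1889893995990 * u ^ 12 + 681297351735 * u ^ 13 + 201621059640 * u ^ 14 + 48469801380 * u ^ 15 + 9314765460 * u ^ 16 + 1396845450 * u ^ 17 + 157477320 * u ^ 18 + 12552540 * u ^ 19 + 630630 * u ^ 20 + 15015 * u ^ 21) / (45045 * (u + 2) ^ 16 * (u + 1) ^ 4 * (u + 3) ^ 4) := by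
    rw [div_eq_div_iff (by positivity) hD.ne']; ring
  have e1 : 1 / (5 * (u + 2) ^ 5) = (1494484992 + 16190254080 * u + 82321214976 * u ^ 2 + 261195846912 * u ^ 3 + 579927059712 * u ^ 4 + 957576267648 * u ^ 5 + 1219752870336 * u ^ 6 + 1226849079456 * u ^ 7 + 989041533480 * u ^ 8 + 644846310108 * u ^ 9 + 341509622454 * u ^ 10 + 146941555761 * u ^ 11 + 51165138024 * u ^ 12 + 14294075796 * u ^ 13 + 3157798644 * u ^ 14 + 539152614 * u ^ 15 + 68612544 * u ^ 16 + 6126120 * u ^ 17 + 342342 * u ^ 18 + 9009 * u ^ 19) / (45045 * (u + 2) ^ 16 * (u + 1) ^ 4 * (u + 3) ^ 4) := by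
    rw [div_eq_div_iff (by positivity) hD.ne']; ring
  have e2 : 1 / (7 * (u + 2) ^ 7) = (266872320 + 2624244480 * u + 12009254400 * u ^ 2 + 33976800000 * u ^ 3 + 66579289920 * u ^ 4 + 95922272160 * u ^ 5 + 105245917920 * u ^ 6 + 89853706800 * u ^ 7 + 60449373270 * u ^ 8 + 32238326835 * u ^ 9 + 13633191000 * u ^ 10 + 4546790820 * u ^ 11 + 1181543220 * u ^ 12 + 234272610 * u ^ 13 + 34234200 * u ^ 14 + 3474900 * u ^ 15 + 218790 * u ^ 16 + 6435 * u ^ 17) / (45045 * (u + 2) ^ 16 * (u + 1) ^ 4 * (u + 3) ^ 4) := by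
    rw [div_eq_div_iff (by positivity) hD.ne']; ring
  have e3 : 1 / (9 * (u + 2) ^ 9) = (51891840 + 458377920 * u + 1863781920 * u ^ 2 + 4628223600 * u ^ 3 + 7851803960 * u ^ 4 + 9642693060 * u ^ 5 + 8858839990 * u ^ 6 + 6202040845 * u ^ 7 + 3337293960 * u ^ 8 + 1380759380 * u ^ 9 + 435815380 * u ^ 10 + 103092990 * u ^ 11 + 17697680 * u ^ 12 + 2082080 * u ^ 13 + 150150 * u ^ 14 + 5005 * u ^ 15) / (45045 * (u + 2) ^ 16 * (u + 1) ^ 4 * (u + 3) ^ 4) := by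
    rw [div_eq_div_iff (by positivity) hD.ne']; ring
  have e4 : 1 / (11 * (u + 2) ^ 11) = (10614240 + 83144880 * u + 295429680 * u ^ 2 + 630466200 * u ^ 3 + 901727190 * u ^ 4 + 913025295 * u ^ 5 + 673578360 * u ^ 6 + 366764580 * u ^ 7 + 147469140 * u ^ 8 + 43267770 * u ^ 9 + 9009000 * u ^ 10 + 1261260 * u ^ 11 + 106470 * u ^ 12 + 4095 * u ^ 13) / (45045 * (u + 2) ^ 16 * (u + 1) ^ 4 * (u + 3) ^ 4) := by
    rw [div_eq_div_iff (by positivity) hD.ne']; ring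
  have e5 : 1 / (13 * (u + 2) ^ 13) = (2245320 + 15343020 * u + 46590390 * u ^ 2 + 82941705 * u ^ 3 + 96160680 * u ^ 4 + 76243860 * u ^ 5 + 42203700 * u ^ 6 + 16320150 * u ^ 7 + 4324320 * u ^ 8 + 748440 * u ^ 9 + 76230 * u ^ 10 + 3465 * u ^ 11) / (45045 * (u + 2) ^ 16 * (u + 1) ^ 4 * (u + 3) ^ 4) := by
    rw [div_eq_div_iff (by positivity) hD.ne']; ring
  have e6 : 1 / (15 * (u + 2) ^ 15) = (486486 + 2837835 * u + 7135128 * u ^ 2 + 10126116 * u ^ 3 + 8924916 * u ^ 4 + 5063058 * u ^ 5 + 1849848 * u ^ 6 + 420420 * u ^ 7 + 54054 * u ^ 8 + 3003 * u ^ 9) / (45045 * (u + 2) ^ 16 * (u + 1) ^ 4 * (u + 3) ^ 4) := by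
    rw [div_eq_div_iff (by positivity) hD.ne']; ring
  have e7 : 1 / (12 * ((u + 1) * (u + 2) / 2)) = (19926466560 + 235796520960 * u + 1323449487360 * u ^ 2 + 4688162519040 * u ^ 3 + 11765025592320 * u ^ 4 + 22253596485120 * u ^ 5 + 32953590109440 * u ^ 6 + 39166509782400 * u ^ 7 + 37998857856960 * u ^ 8 + 30440181451680 * u ^ 9 + 20285467041840 * u ^ 10 + 11293587625320 * u ^ 11 + 5260424829660 * u ^ 12 + 2047500384930 * u ^ 13 + 663283435815 * u ^ 14 + (355093924185/2) * u ^ 15 + (77665402815/2) * u ^ 16 + (13650842205/2) * u ^ 17 + (1881214335/2) * u ^ 18 + (195750555/2) * u ^ 19 + (14459445/2) * u ^ 20 + (675675/2) * u ^ 21 + (15015/2) * u ^ 22) / (45045 * (u + 2) ^ 16 * (u + 1) ^ 4 * (u + 3) ^ 4) := by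
    rw [div_eq_div_iff (by positivity) hD.ne']; ring
  have e8 : 1 / (120 * ((u + 1) * (u + 2) / 2) ^ 2) = (1992646656 + 20590682112 * u + 100462602240 * u ^ 2 + 307827007488 * u ^ 3 + 664530746880 * u ^ 4 + 1074650024448 * u ^ 5 + 1351118600832 * u ^ 6 + 1352648064768 * u ^ 7 + 1095354388128 * u ^ 8 + 724662530592 * u ^ 9 + 393875714232 * u ^ 10 + 176213925888 * u ^ 11 + 64783737018 * u ^ 12 + 19467470022 * u ^ 13 + (9470540079/2) * u ^ 14 + 918056139 * u ^ 15 + (277101825/2) * u ^ 16 + 15687672 * u ^ 17 + (2507505/2) * u ^ 18 + 63063 * u ^ 19 + (3003/2) * u ^ 20) / (45045 * (u + 2) ^ 16 * (u + 1) ^ 4 * (u + 3) ^ 4) := by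
    rw [div_eq_div_iff (by positivity) hD.ne']; ring
  have e9 : 1 / (630 * ((u + 1) * (u + 2) / 2) ^ 3) = (379551744 + 3352707072 * u + 13916897280 * u ^ 2 + 36082016256 * u ^ 3 + 65495812096 * u ^ 4 + 88410516480 * u ^ 5 + 91992243200 * u ^ 6 + 75453627392 * u ^ 7 + 49462368384 * u ^ 8 + 26110591936 * u ^ 9 + 11126873472 * u ^ 10 + 3818951136 * u ^ 11 + 1047895992 * u ^ 12 + 226769972 * u ^ 13 + 37853244 * u ^ 14 + 4702984 * u ^ 15 + 409552 * u ^ 16 + 22308 * u ^ 17 + 572 * u ^ 18) / (45045 * (u + 2) ^ 16 * (u + 1) ^ 4 * (u + 3) ^ 4) := by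
    rw [div_eq_div_iff (by positivity) hD.ne']; ring
  have e10 : 1 / (1680 * ((u + 1) * (u + 2) / 2) ^ 4) = (142331904 + 1043767296 * u + 3582019584 * u ^ 2 + 7635843072 * u ^ 3 + 11316155136 * u ^ 4 + 12361789440 * u ^ 5 + 10296329472 * u ^ 6 + 6669721344 * u ^ 7 + 3395641392 * u ^ 8 + 1363149216 * u ^ 9 + 430033032 * u ^ 10 + 105482520 * u ^ 11 + 19720701 * u ^ 12 + 2716428 * u ^ 13 + 259974 * u ^ 14 + 15444 * u ^ 15 + 429 * u ^ 16) / (45045 * (u + 2) ^ 16 * (u + 1) ^ 4 * (u + 3) ^ 4) := by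
    rw [div_eq_div_iff (by positivity) hD.ne']; ring
  have e11 : 1 / (12 * ((u + 2) * (u + 3) / 2)) = (6642155520 + 83026944000 * u + 492073021440 * u ^ 2 + 1839846328320 * u ^ 3 + 4871113927680 * u ^ 4 + 9715836049920 * u ^ 5 + 15163783514880 * u ^ 6 + 18985438792320 * u ^ 7 + 19393309615680 * u ^ 8 + 16348576564320 * u ^ 9 + 11459023976400 * u ^ 10 + 6706676896920 * u ^ 11 + 3282445186020 * u ^ 12 + 1341826676190 * u ^ 13 + 456319048185 * u ^ 14 + (256340899815/2) * u ^ 15 + (58806142395/2) * u ^ 16 + (10836700875/2) * u ^ 17 + (1565118555/2) * u ^ 18 + (170615445/2) * u ^ 19 + (13198185/2) * u ^ 20 + (645645/2) * u ^ 21 + (15015/2) * u ^ 22) / (45045 * (u + 2) ^ 16 * (u + 1) ^ 4 * (u + 3) ^ 4) := by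
    rw [div_eq_div_iff (by positivity) hD.ne']; ring
  have e12 : 1 / (120 * ((u + 2) * (u + 3) / 2) ^ 2) = (221405184 + 2583060480 * u + 14212982784 * u ^ 2 + 49053548544 * u ^ 3 + 119123676672 * u ^ 4 + 216415879680 * u ^ 5 + 305258937984 * u ^ 6 + 342396198144 * u ^ 7 + 310236999072 * u ^ 8 + 229355686560 * u ^ 9 + 139131560568 * u ^ 10 + 69386981664 * u ^ 11 + 28403761386 * u ^ 12 + 9493257774 * u ^ 13 + (5131253127/2) * u ^ 14 + 552116565 * u ^ 15 + (184801617/2) * u ^ 16 + 11591580 * u ^ 17 + (2051049/2) * u ^ 18 + 57057 * u ^ 19 + (3003/2) * u ^ 20) / (45045 * (u + 2) ^ 16 * (u + 1) ^ 4 * (u + 3) ^ 4) := by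
    rw [div_eq_div_iff (by positivity) hD.ne']; ring
  have e13 : 1 / (630 * ((u + 2) * (u + 3) / 2) ^ 3) = (14057472 + 152289280 * u + 773160960 * u ^ 2 + 2444828672 * u ^ 3 + 5397190656 * u ^ 4 + 8835560448 * u ^ 5 + 11119021056 * u ^ 6 + 11000996864 * u ^ 7 + 8676919680 * u ^ 8 + 5497999936 * u ^ 9 + 2805929984 * u ^ 10 + 1150914336 * u ^ 11 + 376663144 * u ^ 12 + 97041516 * u ^ 13 + 19251804 * u ^ 14 + 2838264 * u ^ 15 + 292864 * u ^ 16 + 18876 * u ^ 17 + 572 * u ^ 18) / (45045 * (u + 2) ^ 16 * (u + 1) ^ 4 * (u + 3) ^ 4) := by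
    rw [div_eq_div_iff (by positivity) hD.ne']; ring
  have e14 : 1 / (1680 * ((u + 2) * (u + 3) / 2) ^ 4) = (1757184 + 17571840 * u + 81709056 * u ^ 2 + 234584064 * u ^ 3 + 465543936 * u ^ 4 + 677394432 * u ^ 5 + 747791616 * u ^ 6 + 639065856 * u ^ 7 + 427428144 * u ^ 8 + 224548896 * u ^ 9 + 92379144 * u ^ 10 + 29456856 * u ^ 11 + 7138989 * u ^ 12 + 1271556 * u ^ 13 + 157014 * u ^ 14 + 12012 * u ^ 15 + 429 * u ^ 16) / (45045 * (u + 2) ^ 16 * (u + 1) ^ 4 * (u + 3) ^ 4) := by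
    rw [div_eq_div_iff (by positivity) hD.ne']; ring
  have e15 : 1 / ((u + 2) ^ 16 * (u + 1)) = (3648645 + 15810795 * u + 27972945 * u ^ 2 + 26081055 * u ^ 3 + 13828815 * u ^ 4 + 4189185 * u ^ 5 + 675675 * u ^ 6 + 45045 * u ^ 7) / (45045 * (u + 2) ^ 16 * (u + 1) ^ 4 * (u + 3) ^ 4) := by
    rw [div_eq_div_iff (by positivity) hD.ne']; ring
  have key : 1 / (3 * (u + 2) ^ 3) + 1 / (5 * (u + 2) ^ 5) + 1 / (7 * (u + 2) ^ 7) + 1 / (9 * (u + 2) ^ 9) + 1 / (11 * (u + 2) ^ 11) + 1 / (13 * (u + 2) ^ 13) + 1 / (15 * (u + 2) ^ 15) - 1 / (12 * ((u + 1) * (u + 2) / 2)) + 1 / (120 * ((u + 1) * (u + 2) / 2) ^ 2) - 1 / (630 * ((u + 1) * (u + 2) / 2) ^ 3) + 1 / (1680 * ((u + 1) * (u + 2) / 2) ^ 4) + 1 / (12 * ((u + 2) * (u + 3) / 2)) - 1 / (120 * ((u + 2) * (u + 3) / 2) ^ 2) + 1 / (630 * ((u + 2) * (u + 3) / 2) ^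 3) - 1 / (1680 * ((u + 2) * (u + 3) / 2) ^ 4) - 1 / ((u + 2) ^ 16 * (u + 1))
      = (48190713 + 320474236 * u + 979096653 * u ^ 2 + 1817165846 * u ^ 3 + 2286602011 * u ^ 4 + 2063118360 * u ^ 5 + 1375654559 * u ^ 6 + 687300070 * u ^ 7 + 257497344 * u ^ 8 + 71470208 * u ^ 9 + 14285568 * u ^ 10 + 1947264 * u ^ 11 + 162240 * u ^ 12 + 6240 * u ^ 13) / (45045 * (u + 2) ^ 16 * (u + 1) ^ 4 * (u + 3) ^ 4) := by
    linear_combination e0 + e1 + e2 + e3 + e4 + e5 + e6 - e7 + e8 - e9 + e10 + e11 - e12 + e13 - e14 - e15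
  rw [key]
  exact div_pos hp hD

lemma rat_high (u : ℝ) (hu : 0 ≤ u) :
    0 < 1 / (2310 * ((u + 1) * (u + 2) / 2) ^ 5) - 1 / (2310 * ((u + 2) * (u + 3) / 2) ^ 5) - 1 / (3 * (u + 2) ^ 3) - 1 / (5 * (u + 2) ^ 5) - 1 / (7 * (u + 2) ^ 7) - 1 / (9 * (u + 2) ^ 9) - 1 / (11 * (u + 2) ^ 11) - 1 / (13 * (u + 2) ^ 13) - 1 / (15 * (u + 2) ^ 15) + 1 / (12 * ((u + 1) * (u + 2) / 2)) - 1 / (120 * ((u + 1) * (u + 2) / 2) ^ 2) + 1 / (630 * ((u + 1) * (u + 2) / 2) ^ 3) - 1 / (1680 * ((u + 1) * (u + 2) / 2) ^ 4) - 1 / (12 * ((u + 2) * (u + 3) / 2)) + 1 / (120 * ((u + 2) * (u + 3) / 2) ^ 2) - 1 / (630 * ((u + 2) * (u + 3) / 2) ^ 3) + 1 / (1680 * ((u + 2) * (u + 3) / 2) ^ 4) - 1 / ((u + 2) ^ 16 * (u + 1)) := by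
  have hD : (0:ℝ) < (45045 * (u + 2) ^ 16 * (u + 1) ^ 5 * (u + 3) ^ 5) := by positivity
  have hp : (0:ℝ) < 142800375 + 933895422 * u + 2827148264 * u ^ 2 + 5236771574 * u ^ 3 + 6610305430 * u ^ 4 + 5996303994 * u ^ 5 + 4018767584 * u ^ 6 + 2015028514 * u ^ 7 + 756328299 * u ^ 8 + 210052400 * u ^ 9 + 41985856 * u ^ 10 + 5722336 * u ^ 11 + 476736 * u ^ 12 + 18336 * u ^ 13 := by
    have h := pow_nonneg hu
    linarith [h 2, h 3, h 4, h 5, h 6, h 7, h 8, h 9, h 10, h 11, h 12, h 13]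
  have e0 : 1 / (2310 * ((u + 1) * (u + 2) / 2) ^ 5) = (310542336 + 2225553408 * u + 7461642240 * u ^ 2 + 15534305280 * u ^ 3 + 22475980800 * u ^ 4 + 23963117568 * u ^ 5 + 19473552384 * u ^ 6 + 12303582720 * u ^ 7 + 6107587200 * u ^ 8 + 2389907520 * u ^ 9 + 734681376 * u ^ 10 + 175554288 * u ^ 11 + 31964400 * u ^ 12 + 4286880 * u ^ 13 + 399360 * u ^ 14 + 23088 * u ^ 15 + 624 * u ^ 16) / (45045 * (u + 2) ^ 16 * (u + 1) ^ 5 * (u + 3) ^ 5) := by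
    rw [div_eq_div_iff (by positivity) hD.ne']; ring
  have e1 : 1 / (2310 * ((u + 2) * (u + 3) / 2) ^ 5) = (1277952 + 13418496 * u + 65495040 * u ^ 2 + 197283840 * u ^ 3 + 410542080 * u ^ 4 + 625956864 * u ^ 5 + 723520512 * u ^ 6 + 646863360 * u ^ 7 + 452200320 * u ^ 8 + 248064960 * u ^ 9 + 106460640 * u ^ 10 + 35377680 * u ^ 11 + 8926320 * u ^ 12 + 1653600 * u ^ 13 + 212160 * u ^ 14 + 16848 * u ^ 15 + 624 * u ^ 16) / (45045 * (u + 2) ^ 16 * (u + 1) ^ 5 * (u + 3) ^ 5) := by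
    rw [div_eq_div_iff (by positivity) hD.ne']; ring
  have e2 : 1 / (3 * (u + 2) ^ 3) = (29889699840 + 393547714560 * u + 2459258081280 * u ^ 2 + 9706126510080 * u ^ 3 + 27161688153600 * u ^ 4 + 57351895560960 * u ^ 5 + 94932300503040 * u ^ 6 + 126333559672320 * u ^ 7 + 137525209741920 * u ^ 8 + 123940744527600 * u ^ 9 + 93227188214160 * u ^ 10 + 58827024296040 * u ^ 11 + 31218130913970 * u ^ 12 + 13934553077445 * u ^ 13 + 5219946581850 * u ^ 14 + 1633190994435 * u ^ 15 + 423444561540 * u ^ 16 + 89919399570 * u ^ 17 + 15374579220 * u ^ 18 + 2064412350 * u ^ 19 + 209579370 * u ^ 20 + 15120105 * u ^ 21 + 690690 * u ^ 22 + 15015 * u ^ 23) / (45045 * (u + 2) ^ 16 * (u + 1) ^ 5 * (u + 3) ^ 5) := by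
    rw [div_eq_div_iff (by positivity) hD.ne']; ring
  have e3 : 1 / (5 * (u + 2) ^ 5) = (4483454976 + 54548702208 * u + 313219146240 * u ^ 2 + 1129062654720 * u ^ 3 + 2866885781760 * u ^ 4 + 5453632888704 * u ^ 5 + 8069490741312 * u ^ 6 + 9517134987360 * u ^ 7 + 9094273788600 * u ^ 8 + 7117554143700 * u ^ 9 + 4592955641274 * u ^ 10 + 2451709467207 * u ^ 11 + 1082771259570 * u ^ 12 + 394484335245 * u ^ 13 + 117814837140 * u ^ 14 + 28542728214 * u ^ 15 + 5520246732 * u ^ 16 + 831981150 * u ^ 17 + 94144050 * u ^ 18 + 7522515 * u ^ 19 + 378378 * u ^ 20 + 9009 * u ^ 21) / (45045 * (u + 2) ^ 16 * (u + 1) ^ 5 * (u + 3) ^ 5) := by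
    rw [div_eq_div_iff (by positivity) hD.ne']; ring
  have e4 : 1 / (7 * (u + 2) ^ 7) = (800616960 + 8940222720 * u + 46791613440 * u ^ 2 + 152591662080 * u ^ 3 + 347654324160 * u ^ 4 + 588060776160 * u ^ 5 + 766006132320 * u ^ 6 + 786467064240 * u ^ 7 + 646008864930 * u ^ 8 + 428366180385 * u ^ 9 + 230302253610 * u ^ 10 + 100411463295 * u ^ 11 + 35364983940 * u ^ 12 + 9975781530 * u ^ 13 + 2221336260 * u ^ 14 + 381634110 * u ^ 15 + 48790170 * u ^ 16 + 4369365 * u ^ 17 + 244530 * u ^ 18 + 6435 * u ^ 19) / (45045 * (u + 2) ^ 16 * (u + 1) ^ 5 * (u + 3) ^ 5) := by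
    rw [div_eq_div_iff (by positivity) hD.ne']; ring
  have e5 : 1 / (9 * (u + 2) ^ 9) = (155675520 + 1582701120 * u + 7476749280 * u ^ 2 + 21798176400 * u ^ 3 + 43932088200 * u ^ 4 + 64963518620 * u ^ 5 + 72999096170 * u ^ 6 + 63684175555 * u ^ 7 + 43678885250 * u ^ 8 + 23693494825 * u ^ 9 + 10167777620 * u ^ 10 + 3433299870 * u ^ 11 + 901280380 * u ^ 12 + 180129950 * u ^ 13 + 26476450 * u ^ 14 + 2697695 * u ^ 15 + 170170 * u ^ 16 + 5005 * u ^ 17) / (45045 * (u + 2) ^ 16 * (u + 1) ^ 5 * (u + 3) ^ 5) := by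
    rw [div_eq_div_iff (by positivity) hD.ne']; ring
  have e6 : 1 / (11 * (u + 2) ^ 11) = (31842720 + 291891600 * u + 1229482800 * u ^ 2 + 3156262200 * u ^ 3 + 5522476050 * u ^ 4 + 6976450845 * u ^ 5 + 6574563450 * u ^ 6 + 4707632475 * u ^ 7 + 2583044100 * u ^ 8 + 1086444450 * u ^ 9 + 347567220 * u ^ 10 + 83087550 * u ^ 11 + 14373450 * u ^ 12 + 1699425 * u ^ 13 + 122850 * u ^ 14 + 4095 * u ^ 15) / (45045 * (u + 2) ^ 16 * (u + 1) ^ 5 * (u + 3) ^ 5) := by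
    rw [div_eq_div_iff (by positivity) hD.ne']; ring
  have e7 : 1 / (13 * (u + 2) ^ 13) = (6735960 + 55010340 * u + 203388570 * u ^ 2 + 450529695 * u ^ 3 + 666839250 * u ^ 4 + 696316005 * u ^ 5 + 527747220 * u ^ 6 + 294019110 * u ^ 7 + 120457260 * u ^ 8 + 35862750 * u ^ 9 + 7546770 * u ^ 10 + 1063755 * u ^ 11 + 90090 * u ^ 12 + 3465 * u ^ 13) / (45045 * (u + 2) ^ 16 * (u + 1) ^ 5 * (u + 3) ^ 5) := by
    rw [div_eq_div_iff (by positivity) hD.ne']; ring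
  have e8 : 1 / (15 * (u + 2) ^ 15) = (1459458 + 10459449 * u + 33243210 * u ^ 2 + 61756695 * u ^ 3 + 74414340 * u ^ 4 + 61014954 * u ^ 5 + 34726692 * u ^ 6 + 13723710 * u ^ 7 + 3693690 * u ^ 8 + 645645 * u ^ 9 + 66066 * u ^ 10 + 3003 * u ^ 11) / (45045 * (u + 2) ^ 16 * (u + 1) ^ 5 * (u + 3) ^ 5) := by
    rw [div_eq_div_iff (by positivity) hD.ne']; ring
  have e9 : 1 / (12 * ((u + 1) * (u + 2) / 2)) = (59779399680 + 787095429120 * u + 4933461012480 * u ^ 2 + 19594082027520 * u ^ 3 + 55371176340480 * u ^ 4 + 118509054343680 * u ^ 5 + 199640181861120 * u ^ 6 + 271567486270080 * u ^ 7 + 303616202809920 * u ^ 8 + 282482485565280 * u ^ 9 + 220615984789200 * u ^ 10 + 145462812495000 * u ^ 11 + 81241092032100 * u ^ 12 + 38477788098750 * u ^ 13 + 15440276676825 * u ^ 14 + (10466550028935/2) * u ^ 15 + (2979938776815/2) * u ^ 16 + 353354031030 * u ^ 17 + 68956207320 * u ^ 18 + 10881475605 * u ^ 19 + 1353797445 *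 u ^ 20 + 127807680 * u ^ 21 + 8603595 * u ^ 22 + (735735/2) * u ^ 23 + (15015/2) * u ^ 24) / (45045 * (u + 2) ^ 16 * (u + 1) ^ 5 * (u + 3) ^ 5) := by
    rw [div_eq_div_iff (by positivity) hD.ne']; ring
  have e10 : 1 / (120 * ((u + 1) * (u + 2) / 2) ^ 2) = (5977939968 + 69742632960 * u + 385743181824 * u ^ 2 + 1345922113536 * u ^ 3 + 3325362872832 * u ^ 4 + 6189900068352 * u ^ 5 + 9016486647168 * u ^ 6 + 10537068622080 * u ^ 7 + 10047774024288 * u ^ 8 + 7908053209056 * u ^ 9 + 5175631653192 * u ^ 10 + 2828807165184 * u ^ 11 + 1293082628838 * u ^ 12 + 493751284026 * u ^ 13 + (313718854449/2) * u ^ 14 + 41162718597 * u ^ 15 + 8823147333 * u ^ 16 + 1519322805 * u ^ 17 + 205062858 * u ^ 18 + 20891871 * u ^ 19 + 1510509 * u ^ 20 + 69069 * u ^ 21 + (3003/2) * u ^ 22) / (45045 * (u + 2) ^ 16 * (u + 1) ^ 5 * (u + 3) ^ 5) := by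
    rw [div_eq_div_iff (by positivity) hD.ne']; ring
  have e11 : 1 / (630 * ((u + 1) * (u + 2) / 2) ^ 3) = (1138655232 + 11576328192 * u + 55541071872 * u ^ 2 + 167266344960 * u ^ 3 + 354732398592 * u ^ 4 + 563296814080 * u ^ 5 + 695114607616 * u ^ 6 + 682740371456 * u ^ 7 + 542193857920 * u ^ 8 + 351634876736 * u ^ 9 + 187285356544 * u ^ 10 + 82074939232 * u ^ 11 + 29546365992 * u ^ 12 + 8690845020 * u ^ 13 + 2068535612 * u ^ 14 + 392291900 * u ^ 15 + 57893836 * u ^ 16 + 6408116 * u ^ 17 + 500500 * u ^ 18 + 24596 * u ^ 19 + 572 * u ^ 20) / (45045 * (u + 2) ^ 16 * (u + 1) ^ 5 * (u + 3) ^ 5) := by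
    rw [div_eq_div_iff (by positivity) hD.ne']; ring
  have e12 : 1 / (1680 * ((u + 1) * (u + 2) / 2) ^ 4) = (426995712 + 3700629504 * u + 15063459840 * u ^ 2 + 38279374848 * u ^ 3 + 68073857280 * u ^ 4 + 89985831936 * u ^ 5 + 91652301312 * u ^ 6 + 73556271360 * u ^ 7 + 47162139024 * u ^ 8 + 24341734560 * u ^ 9 + 10138337352 * u ^ 10 + 3399728904 * u ^ 11 + 911125215 * u ^ 12 + 192514608 * u ^ 13 + 31366335 * u ^ 14 + 3802656 * u ^ 15 + 323037 * u ^ 16 + 17160 * u ^ 17 + 429 * u ^ 18) / (45045 * (u + 2) ^ 16 * (u + 1) ^ 5 * (u + 3) ^ 5) := by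
    rw [div_eq_div_iff (by positivity) hD.ne']; ring
  have e13 : 1 / (12 * ((u + 2) * (u + 3) / 2)) = (19926466560 + 275649454080 * u + 1814968995840 * u ^ 2 + 7570858014720 * u ^ 3 + 22464800117760 * u ^ 4 + 50471810188800 * u ^ 5 + 89225808672000 * u ^ 6 + 127327286486400 * u ^ 7 + 149285467531200 * u ^ 8 + 145604406948000 * u ^ 9 + 119164687802160 * u ^ 10 + 82304703160680 * u ^ 11 + 48133067122140 * u ^ 12 + 23861937669570 * u ^ 13 + 10018709035335 * u ^ 14 + (7103228437305/2) * u ^ 15 + (2114420122815/2) * u ^ 16 + 262037786010 * u ^ 17 + 53424150780 * u ^ 18 + 8804510715 * u ^ 19 + 1143587445 * u ^ 20 + 112672560 * u ^ 21 + 7912905 * u ^ 22 + (705705/2) * u ^ 23 + (15015/2) * u ^ 24) / (45045 * (u + 2) ^ 16 * (u + 1) ^ 5 * (u + 3) ^ 5) := by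
    rw [div_eq_div_iff (by positivity) hD.ne']; ring
  have e14 : 1 / (120 * ((u + 2) * (u + 3) / 2) ^ 2) = (664215552 + 8634802176 * u + 53192595456 * u ^ 2 + 206595637248 * u ^ 3 + 567798206976 * u ^ 4 + 1174795894272 * u ^ 5 + 1900564009344 * u ^ 6 + 2464640226048 * u ^ 7 + 2605554727776 * u ^ 8 + 2271411254112 * u ^ 9 + 1645054427016 * u ^ 10 + 994042873824 * u ^ 11 + 501890771382 * u ^ 12 + 211481800530 * u ^ 13 + (148147344345/2) * u ^ 14 + 21412113723 * u ^ 15 + 5051295249 * u ^ 16 + 956494539 * u ^ 17 + 141843702 * u ^ 18 + 15864849 * u ^ 19 + 1258257 * u ^ 20 + 63063 * u ^ 21 + (3003/2) * u ^ 22) / (45045 * (u + 2) ^ 16 * (u + 1) ^ 5 * (u + 3) ^ 5) := by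
    rw [div_eq_div_iff (by positivity) hD.ne']; ring
  have e15 : 1 / (630 * ((u + 2) * (u + 3) / 2) ^ 3) = (42172416 + 513097728 * u + 2942697472 * u ^ 2 + 10579419136 * u ^ 3 + 26744047616 * u ^ 4 + 50540272640 * u ^ 5 + 74096495616 * u ^ 6 + 86314635264 * u ^ 7 + 81153767552 * u ^ 8 + 62202675392 * u ^ 9 + 39086709376 * u ^ 10 + 20174462880 * u ^ 11 + 8539576760 * u ^ 12 + 2948691460 * u ^ 13 + 822584620 * u ^ 14 + 182563524 * u ^ 15 + 31483452 * u ^ 16 + 4066348 * u ^ 17 + 370084 * u ^ 18 + 21164 * u ^ 19 + 572 * u ^ 20) / (45045 * (u + 2) ^ 16 * (u + 1) ^ 5 * (u + 3) ^ 5) := by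
    rw [div_eq_div_iff (by positivity) hD.ne']; ring
  have e16 : 1 / (1680 * ((u + 2) * (u + 3) / 2) ^ 4) = (5271552 + 59744256 * u + 317171712 * u ^ 2 + 1048160256 * u ^ 3 + 2416677120 * u ^ 4 + 4128943104 * u ^ 5 + 5418496512 * u ^ 6 + 5585758464 * u ^ 7 + 4586339472 * u ^ 8 + 3022425120 * u ^ 9 + 1602761160 * u ^ 10 + 682436040 * u ^ 11 + 231623535 * u ^ 12 + 61827480 * u ^ 13 + 12696255 * u ^ 14 + 1935648 * u ^ 15 + 206349 * u ^ 16 + 13728 * u ^ 17 + 429 * u ^ 18) / (45045 * (u + 2) ^ 16 * (u + 1) ^ 5 * (u + 3) ^ 5) := by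
    rw [div_eq_div_iff (by positivity) hD.ne']; ring
  have e17 : 1 / ((u + 2) ^ 16 * (u + 1)) = (10945935 + 62026965 * u + 150810660 * u ^ 2 + 205945740 * u ^ 3 + 173783610 * u ^ 4 + 93963870 * u ^ 5 + 32612580 * u ^ 6 + 7027020 * u ^ 7 + 855855 * u ^ 8 + 45045 * u ^ 9) / (45045 * (u + 2) ^ 16 * (u + 1) ^ 5 * (u + 3) ^ 5) := by
    rw [div_eq_div_iff (by positivity) hD.ne']; ring
  have key : 1 / (2310 * ((u + 1) * (u + 2) / 2) ^ 5) - 1 / (2310 * ((u + 2) * (u + 3) / 2) ^ 5) - 1 / (3 * (u + 2) ^ 3) - 1 / (5 * (u + 2) ^ 5) - 1 / (7 * (u + 2) ^ 7) - 1 / (9 * (u + 2) ^ 9) - 1 / (11 * (u + 2) ^ 11) - 1 / (13 * (u + 2) ^ 13) - 1 / (15 * (u + 2) ^ 15) + 1 / (12 * ((u + 1) * (u + 2) / 2)) - 1 / (120 * ((u + 1) * (u + 2) / 2) ^ 2) + 1 / (630 * ((u + 1) * (u + 2) / 2) ^ 3) - 1 / (1680 * ((u + 1) * (u + 2) / 2)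 ^ 4) - 1 / (12 * ((u + 2) * (u + 3) / 2)) + 1 / (120 * ((u + 2) * (u + 3) / 2) ^ 2) - 1 / (630 * ((u + 2) * (u + 3) / 2) ^ 3) + 1 / (1680 * ((u + 2) * (u + 3) / 2) ^ 4) - 1 / ((u + 2) ^ 16 * (u + 1))
      = (142800375 + 933895422 * u + 2827148264 * u ^ 2 + 5236771574 * u ^ 3 + 6610305430 * u ^ 4 + 5996303994 * u ^ 5 + 4018767584 * u ^ 6 + 2015028514 * u ^ 7 + 756328299 * u ^ 8 + 210052400 * u ^ 9 + 41985856 * u ^ 10 + 5722336 * u ^ 11 + 476736 * u ^ 12 + 18336 * u ^ 13) / (45045 * (u + 2) ^ 16 * (u + 1) ^ 5 * (u + 3) ^ 5) := by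
    linear_combination e0 - e1 - e2 - e3 - e4 - e5 - e6 - e7 - e8 + e9 - e10 + e11 - e12 - e13 + e14 - e15 + e16 - e17
  rw [key]
  exact div_pos hp hD

lemma atanh_bound (u : ℝ) (hu : 0 ≤ u) :
    |Real.log ((u + 3) / (u + 1)) / 2 -
      (1 / (u + 2) + 1 / (3 * (u + 2) ^ 3) + 1 / (5 * (u + 2) ^ 5) + 1 / (7 * (u + 2) ^ 7)
        + 1 / (9 * (u + 2) ^ 9) + 1 / (11 * (u + 2) ^ 11) + 1 / (13 * (u + 2) ^ 13)
        + 1 / (15 * (u + 2) ^ 15))| ≤ 1 / ((u + 2) ^ 16 * (u + 1)) := by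
  have h2 : (0:ℝ) < u + 2 := by linarith
  have h1p : (0:ℝ) < u + 1 := by linarith
  have h3p : (0:ℝ) < u + 3 := by linarith
  have hxpos : (0:ℝ) < 1 / (u + 2) := by positivity
  have hxlt : 1 / (u + 2) < 1 := by rw [div_lt_one h2]; linarith
  have hx : |1 / (u + 2)| < 1 := by rw [abs_of_pos hxpos]; exact hxlt
  have hx' : |(-(1 / (u + 2)))| < 1 := by rwa [abs_neg]
  have h1 := Real.abs_log_sub_add_sum_range_le hx 16
  have h2' := Real.abs_log_sub_add_sum_range_le hx' 16
  rw [abs_of_pos hxpos] at h1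
  rw [abs_neg, abs_of_pos hxpos] at h2'
  have hid1 : (∑ i ∈ Finset.range 16, (1 / (u + 2)) ^ (i + 1) / (i + 1))
      = 1 / (u + 2) + 1 / (2 * (u + 2) ^ 2) + 1 / (3 * (u + 2) ^ 3) + 1 / (4 * (u + 2) ^ 4) + 1 / (5 * (u + 2) ^ 5) + 1 / (6 * (u + 2) ^ 6) + 1 / (7 * (u + 2) ^ 7) + 1 / (8 * (u + 2) ^ 8) + 1 / (9 * (u + 2) ^ 9) + 1 / (10 * (u + 2) ^ 10) + 1 / (11 * (u + 2) ^ 11) + 1 / (12 * (u + 2) ^ 12) + 1 / (13 * (u + 2) ^ 13) + 1 / (14 * (u + 2) ^ 14) + 1 / (15 * (u + 2) ^ 15) + 1 / (16 * (u + 2) ^ 16) := by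
    simp only [Finset.sum_range_succ, Finset.sum_range_zero, neg_pow, div_pow, one_pow]
    norm_num
    ring
  have hid2 : (∑ i ∈ Finset.range 16, (-(1 / (u + 2))) ^ (i + 1) / (i + 1))
      = -1 / (u + 2) + 1 / (2 * (u + 2) ^ 2) - 1 / (3 * (u + 2) ^ 3) + 1 / (4 * (u + 2) ^ 4) - 1 / (5 * (u + 2) ^ 5) + 1 / (6 * (u + 2) ^ 6) - 1 / (7 * (u + 2) ^ 7) + 1 / (8 * (u + 2) ^ 8) - 1 / (9 * (u + 2) ^ 9) + 1 / (10 * (u + 2) ^ 10) - 1 / (11 * (u + 2) ^ 11) + 1 / (12 * (u + 2) ^ 12) - 1 / (13 * (u + 2) ^ 13) + 1 / (14 * (u + 2) ^ 14) - 1 / (15 * (u + 2) ^ 15) + 1 / (16 * (u + 2) ^ 16) := by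
    simp only [show (-(1/(u+2):ℝ)) = (-1)/(u+2) from by ring, Finset.sum_range_succ,
      Finset.sum_range_zero, div_pow]
    norm_num
    ring
  rw [hid1] at h1
  rw [hid2] at h2'
  have e1 : 1 - 1 / (u + 2) = (u + 1) / (u + 2) := by
    field_simp
    ring
  have e2 : 1 - -(1 / (u + 2)) = (u + 3) / (u + 2) := by
    field_simp
    ring
  have hlog : Real.log ((u + 3) / (u + 1))
      = Real.log ((u + 3) / (u + 2)) - Real.log ((u + 1) / (u + 2)) := by
    rw [Real.log_div h3p.ne' h1p.ne', Real.log_div h3p.ne' h2.ne', Real.log_div h1p.ne' h2.ne']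
    ring
  have hE : (1 / (u + 2)) ^ (16 + 1) / (1 - 1 / (u + 2)) = 1 / ((u + 2) ^ 16 * (u + 1)) := by
    have hne : 1 - 1 / (u + 2) ≠ 0 := by linarith
    rw [div_eq_div_iff hne (by positivity : ((u:ℝ) + 2) ^ 16 * (u + 1) ≠ 0)]
    rw [div_pow, one_pow]
    field_simp
    ring
  rw [hE] at h1 h2'
  rw [e1] at h1
  rw [e2] at h2'
  have key : Real.log ((u + 3) / (u + 1)) / 2 -
      (1 / (u + 2) + 1 / (3 * (u + 2) ^ 3) + 1 / (5 * (u + 2) ^ 5) + 1 / (7 * (u + 2) ^ 7)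
        + 1 / (9 * (u + 2) ^ 9) + 1 / (11 * (u + 2) ^ 11) + 1 / (13 * (u + 2) ^ 13)
        + 1 / (15 * (u + 2) ^ 15))
      = (((-1 / (u + 2) + 1 / (2 * (u + 2) ^ 2) - 1 / (3 * (u + 2) ^ 3) + 1 / (4 * (u + 2) ^ 4) - 1 / (5 * (u + 2) ^ 5) + 1 / (6 * (u + 2) ^ 6) - 1 / (7 * (u + 2) ^ 7) + 1 / (8 * (u + 2) ^ 8) - 1 / (9 * (u + 2) ^ 9) + 1 / (10 * (u + 2) ^ 10) - 1 / (11 * (u + 2) ^ 11) + 1 / (12 * (u + 2) ^ 12) - 1 / (13 * (u + 2) ^ 13) + 1 / (14 * (u + 2) ^ 14) - 1 / (15 * (u + 2) ^ 15) + 1 / (16 * (u + 2) ^ 16)) + Real.log ((u + 3) / (u + 2)))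
        - ((1 / (u + 2) + 1 / (2 * (u + 2) ^ 2) + 1 / (3 * (u + 2) ^ 3) + 1 / (4 * (u + 2) ^ 4) + 1 / (5 * (u + 2) ^ 5) + 1 / (6 * (u + 2) ^ 6) + 1 / (7 * (u + 2) ^ 7) + 1 / (8 * (u + 2) ^ 8) + 1 / (9 * (u + 2) ^ 9) + 1 / (10 * (u + 2) ^ 10) + 1 / (11 * (u + 2) ^ 11) + 1 / (12 * (u + 2) ^ 12) + 1 / (13 * (u + 2) ^ 13) + 1 / (14 * (u + 2) ^ 14) + 1 / (15 * (u + 2) ^ 15) + 1 / (16 * (u + 2) ^ 16)) + Real.log ((u + 1) / (u + 2)))) / 2 := by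
    rw [hlog]; ring
  rw [key]
  have t1 := abs_sub ((-1 / (u + 2) + 1 / (2 * (u + 2) ^ 2) - 1 / (3 * (u + 2) ^ 3) + 1 / (4 * (u + 2) ^ 4) - 1 / (5 * (u + 2) ^ 5) + 1 / (6 * (u + 2) ^ 6) - 1 / (7 * (u + 2) ^ 7) + 1 / (8 * (u + 2) ^ 8) - 1 / (9 * (u + 2) ^ 9) + 1 / (10 * (u + 2) ^ 10) - 1 / (11 * (u + 2) ^ 11) + 1 / (12 * (u + 2) ^ 12) - 1 / (13 * (u + 2) ^ 13) + 1 / (14 * (u + 2) ^ 14) - 1 / (15 * (u + 2) ^ 15) + 1 / (16 * (u + 2) ^ 16)) + Real.log ((u + 3) / (u + 2)))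
    ((1 / (u + 2) + 1 / (2 * (u + 2) ^ 2) + 1 / (3 * (u + 2) ^ 3) + 1 / (4 * (u + 2) ^ 4) + 1 / (5 * (u + 2) ^ 5) + 1 / (6 * (u + 2) ^ 6) + 1 / (7 * (u + 2) ^ 7) + 1 / (8 * (u + 2) ^ 8) + 1 / (9 * (u + 2) ^ 9) + 1 / (10 * (u + 2) ^ 10) + 1 / (11 * (u + 2) ^ 11) + 1 / (12 * (u + 2) ^ 12) + 1 / (13 * (u + 2) ^ 13) + 1 / (14 * (u + 2) ^ 14) + 1 / (15 * (u + 2) ^ 15) + 1 / (16 * (u + 2) ^ 16)) + Real.log ((u + 1) / (u + 2)))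
  rw [abs_div, abs_two]
  rw [div_le_iff₀ (by norm_num : (0:ℝ) < 2)]
  have hEnn : (0:ℝ) ≤ 1 / ((u + 2) ^ 16 * (u + 1)) := by positivity
  linarith [h1, h2', t1]


lemma Mv_eq (k : ℕ) : Mv (k + 1) = ((k:ℝ) + 1) * ((k:ℝ) + 2) / 2 := by
  unfold Mv; push_cast; ring

lemma step (k : ℕ) : Gs (k+2) < Gs (k+1) ∧ Gs (k+1) - Gs (k+2) < Ws (k+1) - Ws (k+2) := by
  set u : ℝ := (k : ℝ) with hudef
  have hu : 0 ≤ u := Nat.cast_nonneg k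
  have hM1 : Mv (k+1) = (u+1)*(u+2)/2 := Mv_eq k
  have hM2 : Mv (k+2) = (u+2)*(u+3)/2 := by
    have := Mv_eq (k+1); rw [this]; push_cast; ring
  have hharm : (harmonic (k+2) : ℝ) = (harmonic (k+1) : ℝ) + 1/(u+2) := by
    rw [show k + 2 = (k+1) + 1 from rfl, harmonic_succ]
    push_cast
    ring
  have hlog : Real.log (2 * ((u+2)*(u+3)/2)) - Real.log (2 * ((u+1)*(u+2)/2))
      = Real.log ((u+3)/(u+1)) := by
    rw [show (2:ℝ) * ((u+2)*(u+3)/2) = (u+2)*(u+3) from by ring,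
        show (2:ℝ) * ((u+1)*(u+2)/2) = (u+1)*(u+2) from by ring,
        ← Real.log_div (by positivity) (by positivity)]
    congr 1
    rw [div_eq_div_iff (by positivity) (by positivity)]
    ring
  have hdiff : Gs (k+1) - Gs (k+2)
      = Real.log ((u+3)/(u+1)) / 2 - 1/(u+2)
        - (Pc ((u+1)*(u+2)/2) - Pc ((u+2)*(u+3)/2)) := by
    unfold Gs
    rw [hharm, hM1, hM2]
    linear_combination (1/2 : ℝ) * hlog
  have hab := atanh_bound u hu
  rw [abs_le] at hab
  have hlow := rat_low u hu
  have hhigh := rat_high u hu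
  have hW1 : Ws (k+1) = 1 / (2310 * ((u + 1) * (u + 2) / 2) ^ 5) := by unfold Ws; rw [hM1]
  have hW2 : Ws (k+2) = 1 / (2310 * ((u + 2) * (u + 3) / 2) ^ 5) := by unfold Ws; rw [hM2]
  simp only [Pc] at hdiff
  constructor
  · linarith [hab.1, hlow, hdiff]
  · linarith [hab.2, hhigh, hdiff, hW1, hW2]

lemma G_le (n k : ℕ) (h : n ≤ k) : Gs (k+1) ≤ Gs (n+1) := by
  induction k with
  | zero => obtain rfl : n = 0 := Nat.le_zero.mp h; exact le_refl _
  | succ k ih =>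
    rcases Nat.eq_or_lt_of_le h with rfl | h'
    · exact le_refl _
    · exact le_trans (le_of_lt (step k).1) (ih (Nat.lt_succ_iff.mp h'))

lemma U_le (n k : ℕ) (h : n ≤ k) : Gs (n+1) - Ws (n+1) ≤ Gs (k+1) - Ws (k+1) := by
  induction k with
  | zero => obtain rfl : n = 0 := Nat.le_zero.mp h; exact le_refl _
  | succ k ih =>
    rcases Nat.eq_or_lt_of_le h with rfl | h'
    · exact le_refl _
    · have h2 := (step k).2
      have := ih (Nat.lt_succ_iff.mp h')
      linarith

lemma tendsto_Mv : Tendsto Mv atTop atTop := by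
  apply tendsto_atTop_mono (f := fun n : ℕ => (n : ℝ) / 2)
  · intro n
    unfold Mv
    have h0 : (0:ℝ) ≤ (n:ℝ) := Nat.cast_nonneg n
    nlinarith
  · exact (tendsto_natCast_atTop_atTop).atTop_div_const (by norm_num)

lemma tendsto_PcMv : Tendsto (fun n : ℕ => Pc (Mv n)) atTop (𝓝 0) := by
  have base : ∀ c : ℝ, 0 < c → ∀ j : ℕ, j ≠ 0 →
      Tendsto (fun m : ℝ => 1 / (c * m ^ j)) atTop (𝓝 0) := by
    intro c hc j hj
    exact Tendsto.div_atTop tendsto_const_nhds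
      ((tendsto_pow_atTop hj).const_mul_atTop hc)
  have h12 := base 12 (by norm_num) 1 one_ne_zero
  have h120 := base 120 (by norm_num) 2 two_ne_zero
  have h630 := base 630 (by norm_num) 3 three_ne_zero
  have h1680 := base 1680 (by norm_num) 4 four_ne_zero
  have H : Tendsto (fun m : ℝ => 1/(12*m^1) - 1/(120*m^2) + 1/(630*m^3) - 1/(1680*m^4))
      atTop (𝓝 0) := by
    have := ((h12.sub h120).add h630).sub h1680
    simpa using this
  have := H.comp tendsto_Mv
  simp only [Function.comp_def] at this
  apply this.congr
  intro n
  simp only [Pc]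
  norm_num
lemma tendsto_Ws : Tendsto Ws atTop (𝓝 0) := by
  have base : Tendsto (fun m : ℝ => 1 / (2310 * m ^ 5)) atTop (𝓝 0) :=
    Tendsto.div_atTop tendsto_const_nhds
      ((tendsto_pow_atTop (by norm_num)).const_mul_atTop (by norm_num))
  have := base.comp tendsto_Mv
  simp only [Function.comp_def] at this
  exact this.congr (fun n => rfl)

lemma tendsto_Gs : Tendsto Gs atTop (𝓝 Real.eulerMascheroniConstant) := by
  have hfrac : Tendsto (fun n : ℕ => Real.log (((n:ℝ)+1)/(n:ℝ)) / 2) atTop (𝓝 0) := by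
    have hx : Tendsto (fun n : ℕ => ((n:ℝ)+1)/(n:ℝ)) atTop (𝓝 1) := by
      have h1 : Tendsto (fun n : ℕ => 1 + 1/(n:ℝ)) atTop (𝓝 1) := by
        have := tendsto_one_div_atTop_nhds_zero_nat (𝕜 := ℝ)
        simpa using (tendsto_const_nhds (x := (1:ℝ)) (f := atTop)).add this
      apply h1.congr'
      filter_upwards [eventually_ge_atTop 1] with n hn
      have hn0 : (0:ℝ) < (n:ℝ) := by exact_mod_cast hn
      field_simp
    have hlog : Tendsto (fun n : ℕ => Real.log (((n:ℝ)+1)/(n:ℝ))) atTop (𝓝 (Real.log 1)) :=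
      ((Real.continuousAt_log one_ne_zero).tendsto).comp hx
    rw [Real.log_one] at hlog
    simpa using hlog.div_const 2
  have hmain := (Real.tendsto_harmonic_sub_log.sub hfrac).sub tendsto_PcMv
  rw [sub_zero, sub_zero] at hmain
  apply hmain.congr'
  filter_upwards [eventually_ge_atTop 1] with n hn
  have hn0 : (0:ℝ) < (n:ℝ) := by exact_mod_cast hn
  have hn1 : (0:ℝ) < (n:ℝ) + 1 := by linarith
  unfold Gs
  have h2M : (2:ℝ) * Mv n = (n:ℝ) * ((n:ℝ)+1) := by unfold Mv; ring
  rw [h2M, Real.log_mul hn0.ne' hn1.ne', Real.log_div hn1.ne' hn0.ne']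
  ring


/-- **Ramanujan's approximation to the `n`th harmonic number** (Villarino's theorem).
For `n ≥ 1` and `m = n(n+1)/2`, there is `Θₙ ∈ (0,1)` with
`Hₙ = (1/2)·ln(2m) + γ + 1/(12m) − 1/(120m²) + 1/(630m³) − 1/(1680m⁴) + Θₙ/(2310m⁵)`. -/
theorem ramanujan_harmonic (n : ℕ) (hn : 0 < n) (m : ℝ) (hm : m = n * (n + 1) / 2) :
    ∃ Θ : ℝ, 0 < Θ ∧ Θ < 1 ∧
      (harmonic n : ℝ) =
        (1 / 2) * Real.log (2 * m) + Real.eulerMascheroniConstant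
          + 1 / (12 * m) - 1 / (120 * m ^ 2) + 1 / (630 * m ^ 3)
          - 1 / (1680 * m ^ 4) + Θ / (2310 * m ^ 5) := by
  obtain ⟨k, rfl⟩ : ∃ k, n = k + 1 := ⟨n - 1, by omega⟩
  have hm' : m = Mv (k+1) := by rw [hm]; unfold Mv; norm_num
  have hm0 : (0:ℝ) < m := by
    rw [hm']
    unfold Mv
    have h0 : (0:ℝ) ≤ (k:ℝ) := Nat.cast_nonneg k
    push_cast
    nlinarith
  set γ := Real.eulerMascheroniConstant with hγ
  have hlt1 : γ < Gs (k+1) := by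
    have hle : γ ≤ Gs (k+2) := by
      apply le_of_tendsto tendsto_Gs
      rw [eventually_atTop]
      refine ⟨k+2, fun b hb => ?_⟩
      rw [show b = (b-1)+1 from by omega]
      exact G_le (k+1) (b-1) (by omega)
    exact lt_of_le_of_lt hle (step k).1
  have hlt2 : Gs (k+1) - Ws (k+1) < γ := by
    have hle : Gs (k+2) - Ws (k+2) ≤ γ := by
      have ht := tendsto_Gs.sub tendsto_Ws
      rw [sub_zero] at ht
      apply ge_of_tendsto ht
      rw [eventually_atTop]
      refine ⟨k+2, fun b hb => ?_⟩
      rw [show b = (b-1)+1 from by omega]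
      exact U_le (k+1) (b-1) (by omega)
    have := (step k).2
    linarith
  have h2310 : (0:ℝ) < 2310 * m ^ 5 := by positivity
  have hWseq : Ws (k+1) = 1 / (2310 * m ^ 5) := by unfold Ws; rw [hm']
  refine ⟨(Gs (k+1) - γ) * (2310 * m ^ 5), ?_, ?_, ?_⟩
  · exact mul_pos (sub_pos.mpr hlt1) h2310
  · have hlt : Gs (k+1) - γ < 1 / (2310 * m ^ 5) := by
      rw [← hWseq]; linarith
    calc (Gs (k+1) - γ) * (2310 * m ^ 5)
        < (1 / (2310 * m ^ 5)) * (2310 * m ^ 5) := by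
          exact mul_lt_mul_of_pos_right hlt h2310
      _ = 1 := by field_simp
  · rw [mul_div_assoc, div_self h2310.ne', mul_one]
    have hGdef : Gs (k+1) = (harmonic (k+1) : ℝ) - Real.log (2 * m) / 2 - Pc m := by
      unfold Gs; rw [← hm']
    rw [hGdef]
    simp only [Pc]
    ring
end

section
/- For every positive integer n, with m = n(n+1)/2 and ε_n = H_n − (1/2)·ln(n(n+1)) − γ, one has ε_n < 1/(12m) − 1/(120m²) + 1/(630m³) − 1/(1680m⁴) + 1/(2310m⁵). -/
open Real Filter

private noncomputable def Rm (m : ℝ) : ℝ :=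
  1 / (12 * m) - 1 / (120 * m ^ 2) + 1 / (630 * m ^ 3) - 1 / (1680 * m ^ 4) + 1 / (2310 * m ^ 5)

private lemma log_ratio_bound {x : ℝ} (hx0 : 0 < x) (hx1 : x < 1) :
    log ((1 + x) / (1 - x)) ≤ 2 * (x + x^3/3 + x^5/5 + x^7/7 + x^9/9 + x^11/11 + x^13/13)
      + 2 * (x^14 / (1 - x)) := by
  have hax : |x| < 1 := by rw [abs_of_pos hx0]; exact hx1
  have hax' : |(-x)| < 1 := by rwa [abs_neg]
  have h1 := Real.abs_log_sub_add_sum_range_le hax 13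
  have h2 := Real.abs_log_sub_add_sum_range_le hax' 13
  rw [abs_of_pos hx0] at h1
  rw [abs_neg, abs_of_pos hx0] at h2
  rw [abs_le] at h1 h2
  rw [Real.log_div (by linarith) (by linarith)]
  have e1 : (∑ i ∈ Finset.range 13, x ^ (i + 1) / (i + 1))
      - (∑ i ∈ Finset.range 13, (-x) ^ (i + 1) / (i + 1))
      = 2 * (x + x^3/3 + x^5/5 + x^7/7 + x^9/9 + x^11/11 + x^13/13) := by
    simp [Finset.sum_range_succ]
    ring
  have hsub : 1 - -x = 1 + x := by ring
  rw [hsub] at h2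
  have e2 : 2 * (x^14 / (1 - x)) = x ^ (13+1) / (1-x) + x ^ (13+1) / (1-x) := by ring
  linarith [h1.1, h2.2, e1]

private lemma key_ineq (y : ℝ) (hy : 1 ≤ y) :
    (1/(y+1))^3/3 + (1/(y+1))^5/5 + (1/(y+1))^7/7 + (1/(y+1))^9/9 + (1/(y+1))^11/11
      + (1/(y+1))^13/13 + (1/(y+1))^14/(1 - 1/(y+1))
    < Rm (y * (y+1) / 2) - Rm ((y+1) * (y+2) / 2) := by
  have hy0 : (0:ℝ) < y := by linarith
  have h1 : (0:ℝ) < y + 1 := by linarith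
  have h2 : (0:ℝ) < y + 2 := by linarith
  have key : Rm (y * (y+1) / 2) - Rm ((y+1) * (y+2) / 2)
      - ((1/(y+1))^3/3 + (1/(y+1))^5/5 + (1/(y+1))^7/7 + (1/(y+1))^9/9 + (1/(y+1))^11/11
        + (1/(y+1))^13/13 + (1/(y+1))^14/(1 - 1/(y+1)))
      = (19968 + 195936*y + 868816*y^2 + 2283632*y^3 + 2559440*y^4 + 1195724*y^5
          + 360866*y^6 + 434576*y^7 + 379177*y^8 + 138315*y^9 + 18336*y^10)
        / (45045 * y^5 * (y+1)^13 * (y+2)^5) := by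
    have hx : 1 - 1/(y+1) = y / (y+1) := by field_simp; ring
    rw [hx]
    unfold Rm
    field_simp
    ring
  have hpos : 0 < (19968 + 195936*y + 868816*y^2 + 2283632*y^3 + 2559440*y^4 + 1195724*y^5
          + 360866*y^6 + 434576*y^7 + 379177*y^8 + 138315*y^9 + 18336*y^10)
        / (45045 * y^5 * (y+1)^13 * (y+2)^5) := by positivity
  linarith

private noncomputable def Fseq (n : ℕ) : ℝ :=
  (harmonic n : ℝ) - (1/2) * Real.log (n * (n+1)) - Real.eulerMascheroniConstant
    - Rm (n * (n+1) / 2)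

private lemma Fseq_step {n : ℕ} (hn : 1 ≤ n) : Fseq n < Fseq (n+1) := by
  set y : ℝ := (n : ℝ) with hy_def
  have hy : 1 ≤ y := by rw [hy_def]; exact_mod_cast hn
  have hy0 : (0:ℝ) < y := by linarith
  have h1 : (0:ℝ) < y + 1 := by linarith
  have h2 : (0:ℝ) < y + 2 := by linarith
  have hx0 : 0 < 1/(y+1) := by positivity
  have hx1 : 1/(y+1) < 1 := by rw [div_lt_one h1]; linarith
  have hlog := log_ratio_bound hx0 hx1
  have hratio : (1 + 1/(y+1)) / (1 - 1/(y+1)) = (y+2)/y := by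
    have ha : (1:ℝ) + 1/(y+1) = (y+2)/(y+1) := by field_simp; ring
    have hb : (1:ℝ) - 1/(y+1) = y/(y+1) := by field_simp; ring
    rw [ha, hb]
    field_simp
  rw [hratio] at hlog
  have hkey := key_ineq y hy
  -- harmonic step
  have hharm : (harmonic (n+1) : ℝ) = (harmonic n : ℝ) + 1/(y+1) := by
    rw [harmonic_succ]
    push_cast
    rw [hy_def]
    ring
  -- log step
  have hlogstep : Real.log ((n+1 : ℕ) * ((n+1 : ℕ)+1)) - Real.log (n * (n+1))
      = Real.log ((y+2)/y) := by
    push_cast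
    rw [Real.log_mul (by linarith) (by linarith), Real.log_mul hy0.ne' (by linarith),
      Real.log_div (by linarith) hy0.ne']
    rw [hy_def]
    ring
  have hmval : ((n+1 : ℕ) : ℝ) * (((n+1 : ℕ) : ℝ) + 1) / 2 = (y+1)*(y+2)/2 := by
    push_cast; ring
  unfold Fseq
  push_cast
  have expand : Real.log ((y + 1) * (y + 1 + 1)) = Real.log (y * (y+1)) + Real.log ((y+2)/y) := by
    have := hlogstep
    push_cast at this
    linarith [this]
  rw [show ((y:ℝ) + 1) * (y + 1 + 1) / 2 = (y+1)*(y+2)/2 by ring, expand]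
  have hh : (harmonic (n+1) : ℝ) = (harmonic n : ℝ) + 1/(y+1) := hharm
  push_cast at hh
  rw [hh]
  -- now pure inequality
  have hup : (1/2) * Real.log ((y+2)/y) ≤ (1/(y+1)) + ((1/(y+1))^3/3 + (1/(y+1))^5/5
      + (1/(y+1))^7/7 + (1/(y+1))^9/9 + (1/(y+1))^11/11 + (1/(y+1))^13/13
      + (1/(y+1))^14/(1 - 1/(y+1))) := by
    linarith [hlog]
  linarith [hkey, hup]

private lemma Fseq_tendsto : Tendsto Fseq atTop (nhds 0) := by
  have h1 : Tendsto (fun n : ℕ => (harmonic n : ℝ) - Real.log n) atTop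
      (nhds Real.eulerMascheroniConstant) := Real.tendsto_harmonic_sub_log
  have h2 : Tendsto (fun n : ℕ => Real.log (1 + 1/(n:ℝ))) atTop (nhds 0) := by
    have : Tendsto (fun n : ℕ => 1 + 1/(n:ℝ)) atTop (nhds 1) := by
      have := tendsto_one_div_atTop_nhds_zero_nat (𝕜 := ℝ)
      simpa using tendsto_const_nhds.add this
    have hcont := (Real.continuousAt_log one_ne_zero).tendsto
    have := hcont.comp this
    simpa [Function.comp_def] using this
  have hm : Tendsto (fun n : ℕ => (n:ℝ) * ((n:ℝ)+1) / 2) atTop atTop := by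
    apply tendsto_atTop_mono (f := fun n : ℕ => (n:ℝ)/2)
    · intro n
      have : (0:ℝ) ≤ (n:ℝ) := Nat.cast_nonneg n
      have h : (n:ℝ) * 1 ≤ (n:ℝ) * ((n:ℝ)+1) := by nlinarith
      simp only [mul_one] at h
      linarith [h]
    · exact (tendsto_natCast_atTop_atTop).atTop_div_const two_pos
  have hRm : Tendsto Rm atTop (nhds 0) := by
    unfold Rm
    have t1 : Tendsto (fun m : ℝ => 1 / (12 * m)) atTop (nhds 0) := by
      simp only [one_div]
      exact (tendsto_id.const_mul_atTop (by norm_num : (0:ℝ) < 12)).inv_tendsto_atTop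
    have t2 : Tendsto (fun m : ℝ => 1 / (120 * m ^ 2)) atTop (nhds 0) := by
      simp only [one_div]
      exact (((tendsto_pow_atTop (by norm_num)).const_mul_atTop
        (by norm_num : (0:ℝ) < 120))).inv_tendsto_atTop
    have t3 : Tendsto (fun m : ℝ => 1 / (630 * m ^ 3)) atTop (nhds 0) := by
      simp only [one_div]
      exact (((tendsto_pow_atTop (by norm_num)).const_mul_atTop
        (by norm_num : (0:ℝ) < 630))).inv_tendsto_atTop
    have t4 : Tendsto (fun m : ℝ => 1 / (1680 * m ^ 4)) atTop (nhds 0) := by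
      simp only [one_div]
      exact (((tendsto_pow_atTop (by norm_num)).const_mul_atTop
        (by norm_num : (0:ℝ) < 1680))).inv_tendsto_atTop
    have t5 : Tendsto (fun m : ℝ => 1 / (2310 * m ^ 5)) atTop (nhds 0) := by
      simp only [one_div]
      exact (((tendsto_pow_atTop (by norm_num)).const_mul_atTop
        (by norm_num : (0:ℝ) < 2310))).inv_tendsto_atTop
    have := (((t1.sub t2).add t3).sub t4).add t5
    simpa using this
  have h3 : Tendsto (fun n : ℕ => Rm ((n:ℝ) * ((n:ℝ)+1) / 2)) atTop (nhds 0) := hRm.comp hm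
  have hG : Tendsto (fun n : ℕ => ((harmonic n : ℝ) - Real.log n - Real.eulerMascheroniConstant)
      - (1/2) * Real.log (1 + 1/(n:ℝ)) - Rm ((n:ℝ) * ((n:ℝ)+1) / 2)) atTop (nhds 0) := by
    have := ((h1.sub (tendsto_const_nhds
        (x := Real.eulerMascheroniConstant))).sub (h2.const_mul (1/2))).sub h3
    simpa using this
  apply hG.congr'
  filter_upwards [eventually_ge_atTop 1] with n hn
  have hy0 : (0:ℝ) < (n:ℝ) := by exact_mod_cast hn
  unfold Fseq
  have hl1 : Real.log ((n:ℝ) * ((n:ℝ)+1)) = Real.log n + Real.log ((n:ℝ)+1) :=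
    Real.log_mul hy0.ne' (by linarith)
  have hl2 : Real.log (1 + 1/(n:ℝ)) = Real.log ((n:ℝ)+1) - Real.log n := by
    rw [show (1 : ℝ) + 1/(n:ℝ) = ((n:ℝ)+1)/(n:ℝ) by field_simp,
      Real.log_div (by linarith) hy0.ne']
  rw [hl1, hl2]
  ring

private lemma Fseq_neg {n : ℕ} (hn : 1 ≤ n) : Fseq n < 0 := by
  have hmono : ∀ j, n + 1 ≤ j → Fseq (n+1) ≤ Fseq j := by
    intro j hj
    induction j with
    | zero => omega
    | succ k ih =>
      rcases Nat.lt_or_ge (n+1) (k+1) with h | h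
      · have hk : n + 1 ≤ k := by omega
        exact (ih hk).trans (Fseq_step (by omega)).le
      · have : n + 1 = k + 1 := by omega
        rw [this]
  have hle : Fseq (n+1) ≤ 0 :=
    ge_of_tendsto Fseq_tendsto (eventually_atTop.mpr ⟨n+1, hmono⟩)
  exact lt_of_lt_of_le (Fseq_step hn) hle

open Real

/-- Upper bound on `εₙ = Hₙ − (1/2)ln(n(n+1)) − γ` by the five-term Ramanujan expansion. -/
theorem epsilon_lt_ramanujan_five_terms (n : ℕ) (hn : 0 < n)
    (m : ℝ) (hm : m = n * (n + 1) / 2)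
    (ε : ℝ) (hε : ε = (harmonic n : ℝ) - (1 / 2) * Real.log (n * (n + 1))
      - Real.eulerMascheroniConstant) :
    ε < 1 / (12 * m) - 1 / (120 * m ^ 2) + 1 / (630 * m ^ 3)
      - 1 / (1680 * m ^ 4) + 1 / (2310 * m ^ 5) := by
  have h := Fseq_neg (n := n) hn
  unfold Fseq Rm at h
  subst hm hε
  linarith
end

section
/- For every positive integer n, with m = n(n+1)/2 and ε_n = H_n − (1/2)·ln(n(n+1)) − γ, one has ε_n > 1/(12m) − 1/(120m²) + 1/(630m³) − 1/(1680m⁴). -/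
open Real Filter Topology

/-- Lower bound for `artanh`: truncated Taylor series up to degree 11. -/
lemma logLB (x : ℝ) (h0 : 0 ≤ x) (h1 : x ≤ 1/2) :
    2*(x + x^3/3 + x^5/5 + x^7/7 + x^9/9 + x^11/11) ≤ Real.log (1+x) - Real.log (1-x) := by
  set F : ℝ → ℝ := fun t => Real.log (1+t) - Real.log (1-t)
    - 2*(t + t^3/3 + t^5/5 + t^7/7 + t^9/9 + t^11/11) with hFdef
  have hder : ∀ t ∈ Set.Ioo (0:ℝ) (1/2), HasDerivAt F (2*t^12/((1+t)*(1-t))) t := by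
    intro t ht
    obtain ⟨ht0, ht1⟩ := ht
    have h1t : (0:ℝ) < 1 + t := by linarith
    have h2t : (0:ℝ) < 1 - t := by linarith
    have d1 : HasDerivAt (fun t : ℝ => Real.log (1+t)) (1/(1+t)) t := by
      have := ((hasDerivAt_id t).const_add 1).log h1t.ne'
      simpa using this
    have d2 : HasDerivAt (fun t : ℝ => Real.log (1-t)) (-1/(1-t)) t := by
      have := (((hasDerivAt_id t).neg).const_add 1).log (by simpa [sub_eq_add_neg] using h2t.ne')
      simpa [sub_eq_add_neg] using this
    have d3 : HasDerivAt (fun t : ℝ => 2*(t + t^3/3 + t^5/5 + t^7/7 + t^9/9 + t^11/11))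
        (2*(1 + t^2 + t^4 + t^6 + t^8 + t^10)) t := by
      have h := ((((((hasDerivAt_id t).add ((hasDerivAt_pow 3 t).div_const 3)).add
        ((hasDerivAt_pow 5 t).div_const 5)).add ((hasDerivAt_pow 7 t).div_const 7)).add
        ((hasDerivAt_pow 9 t).div_const 9)).add ((hasDerivAt_pow 11 t).div_const 11)).const_mul 2
      refine HasDerivAt.congr_deriv h ?_
      push_cast
      ring
    have h := (d1.sub d2).sub d3
    refine HasDerivAt.congr_deriv h ?_
    field_simp
    ring
  have hmono : MonotoneOn F (Set.Icc 0 (1/2)) := by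
    apply monotoneOn_of_deriv_nonneg (convex_Icc _ _)
    · apply ContinuousOn.sub
      apply ContinuousOn.sub
      · exact ContinuousOn.log (by fun_prop) (fun t ht => by
          have := ht.1; intro hc; linarith)
      · exact ContinuousOn.log (by fun_prop) (fun t ht => by
          have := ht.2; intro hc; norm_num at this; linarith)
      · fun_prop
    · intro t ht
      rw [interior_Icc] at ht
      exact ((hder t ht).differentiableAt).differentiableWithinAt
    · intro t ht
      rw [interior_Icc] at ht
      rw [(hder t ht).deriv]
      obtain ⟨ht0, ht1⟩ := ht
      apply div_nonneg (by positivity)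
      nlinarith
  have hx : x ∈ Set.Icc (0:ℝ) (1/2) := ⟨h0, h1⟩
  have h3 := hmono (Set.left_mem_Icc.mpr (by norm_num)) hx h0
  simp only [hFdef] at h3
  norm_num at h3
  linarith

/-- The four-term Ramanujan approximation as a function of `x`, with `m = x(x+1)/2`. -/
noncomputable def fRam (x : ℝ) : ℝ :=
  1 / (12 * (x*(x+1)/2)) - 1 / (120 * (x*(x+1)/2)^2)
    + 1 / (630 * (x*(x+1)/2)^3) - 1 / (1680 * (x*(x+1)/2)^4)

lemma polyStep (x : ℝ) (hx : 1 ≤ x) :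
    fRam x - fRam (x+1) < (1/(x+1))^3/3 + (1/(x+1))^5/5 + (1/(x+1))^7/7
      + (1/(x+1))^9/9 + (1/(x+1))^11/11 := by
  have hx0 : (0:ℝ) < x := by linarith
  have hx1 : (0:ℝ) < x+1 := by linarith
  have hx2 : (0:ℝ) < x+2 := by linarith
  have hs : (0:ℝ) ≤ x - 1 := by linarith
  have hA : fRam x - fRam (x+1) =
      ((-16/105) + (-32/315)*x + (-16/105)*x^2 + (368/315)*x^3 + (190/21)*x^4 + (684/35)*x^5
        + (301/15)*x^6 + (163/15)*x^7 + 3*x^8 + (1/3)*x^9) / (x^4*(x+1)^4*(x+2)^4) := by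
    unfold fRam
    field_simp
    ring
  have hC : (1/(x+1))^3/3 + (1/(x+1))^5/5 + (1/(x+1))^7/7 + (1/(x+1))^9/9 + (1/(x+1))^11/11 =
      (1155*(x+1)^8 + 693*(x+1)^6 + 495*(x+1)^4 + 385*(x+1)^2 + 315) / (3465*(x+1)^11) := by
    field_simp
    ring
  rw [hA, hC, div_lt_div_iff₀ (by positivity) (by positivity)]
  nlinarith [pow_nonneg hs 1, pow_nonneg hs 2, pow_nonneg hs 3, pow_nonneg hs 4,
    pow_nonneg hs 5, pow_nonneg hs 6, pow_nonneg hs 7, pow_nonneg hs 8,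
    pow_nonneg hs 9, pow_nonneg hs 10, pow_nonneg hs 11, pow_nonneg hs 12]

noncomputable def aSeq (k : ℕ) : ℝ :=
  (harmonic (k+1) : ℝ) - (1/2) * Real.log (((k:ℝ)+1) * ((k:ℝ)+2))
    - Real.eulerMascheroniConstant - fRam ((k:ℝ)+1)

lemma step_real (x : ℝ) (hx : 1 ≤ x) :
    1/(x+1) + (1/2)*Real.log (x*(x+1)) + fRam x
      < (1/2)*Real.log ((x+1)*(x+2)) + fRam (x+1) := by
  have hx0 : (0:ℝ) < x := by linarith
  have hxp1 : (0:ℝ) < x+1 := by linarith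
  have hxp2 : (0:ℝ) < x+2 := by linarith
  have hu0 : (0:ℝ) ≤ 1/(x+1) := by positivity
  have hu1 : 1/(x+1) ≤ 1/2 := by
    rw [div_le_div_iff₀ hxp1 (by norm_num)]; linarith
  have hlog := logLB (1/(x+1)) hu0 hu1
  have hps := polyStep x hx
  have hla : Real.log (1 + 1/(x+1)) = Real.log (x+2) - Real.log (x+1) := by
    rw [show (1:ℝ) + 1/(x+1) = (x+2)/(x+1) by field_simp; try ring]
    exact Real.log_div hxp2.ne' hxp1.ne'
  have hlb : Real.log (1 - 1/(x+1)) = Real.log x - Real.log (x+1) := by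
    rw [show (1:ℝ) - 1/(x+1) = x/(x+1) by field_simp; try ring]
    exact Real.log_div hx0.ne' hxp1.ne'
  have hl1 : Real.log (x*(x+1)) = Real.log x + Real.log (x+1) := Real.log_mul hx0.ne' hxp1.ne'
  have hl2 : Real.log ((x+1)*(x+2)) = Real.log (x+1) + Real.log (x+2) :=
    Real.log_mul hxp1.ne' hxp2.ne'
  rw [hla, hlb] at hlog
  rw [hl1, hl2]
  linarith

lemma aSeq_succ_lt (k : ℕ) : aSeq (k+1) < aSeq k := by
  have hk0 : (0:ℝ) ≤ (k:ℝ) := Nat.cast_nonneg k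
  have hstep := step_real ((k:ℝ)+1) (by linarith)
  have hh : (harmonic (k+1+1) : ℝ) = (harmonic (k+1) : ℝ) + 1/((k:ℝ)+1+1) := by
    rw [harmonic_succ]
    push_cast
    ring
  unfold aSeq
  rw [hh]
  push_cast
  ring_nf at hstep ⊢
  linarith

lemma aSeq_tendsto : Tendsto aSeq atTop (𝓝 0) := by
  have T1 : Tendsto (fun k : ℕ => (harmonic (k+1) : ℝ) - Real.log ((k:ℝ)+1)) atTop
      (𝓝 Real.eulerMascheroniConstant) := by
    have h := Real.tendsto_harmonic_sub_log.comp (tendsto_add_atTop_nat 1)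
    refine h.congr (fun k => ?_)
    simp only [Function.comp]
    push_cast
    ring_nf
  have hv : Tendsto (fun k : ℕ => 1/((k:ℝ)+1)) atTop (𝓝 0) :=
    tendsto_one_div_add_atTop_nhds_zero_nat
  have T2 : Tendsto (fun k : ℕ => Real.log (1 + 1/((k:ℝ)+1))) atTop (𝓝 0) := by
    have h := (tendsto_const_nhds.add hv).log (x := (1:ℝ) + 0) (by norm_num)
    simpa using h
  have hm : Tendsto (fun k : ℕ => ((k:ℝ)+1)*(((k:ℝ)+1)+1)/2) atTop atTop := by
    apply tendsto_atTop_mono (fun k => ?_) tendsto_natCast_atTop_atTop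
    have hk0 : (0:ℝ) ≤ (k:ℝ) := Nat.cast_nonneg k
    nlinarith
  have hi : Tendsto (fun k : ℕ => (((k:ℝ)+1)*(((k:ℝ)+1)+1)/2)⁻¹) atTop (𝓝 0) :=
    hm.inv_tendsto_atTop
  have T3 : Tendsto (fun k : ℕ => fRam ((k:ℝ)+1)) atTop (𝓝 0) := by
    have h4 := (((hi.div_const 12).sub ((hi.pow 2).div_const 120)).add
      ((hi.pow 3).div_const 630)).sub ((hi.pow 4).div_const 1680)
    norm_num at h4
    refine h4.congr (fun k => ?_)
    have hmk : (0:ℝ) < ((k:ℝ)+1)*(((k:ℝ)+1)+1)/2 := by positivity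
    unfold fRam
    field_simp
    try ring
  have hcomb := ((T1.sub (tendsto_const_nhds (x := Real.eulerMascheroniConstant))).sub
    (T2.const_mul (1/2))).sub T3
  norm_num at hcomb
  refine hcomb.congr (fun k => ?_)
  have hk1 : (0:ℝ) < (k:ℝ)+1 := by positivity
  have hk2 : (0:ℝ) < (k:ℝ)+2 := by positivity
  unfold aSeq
  rw [show (harmonic (k+1) : ℝ) = (harmonic k : ℝ) + ((k:ℝ)+1)⁻¹ by
      rw [harmonic_succ]; push_cast; ring,
    show (1:ℝ) + ((k:ℝ)+1)⁻¹ = ((k:ℝ)+2)/((k:ℝ)+1) by field_simp; try ring,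
    Real.log_div hk2.ne' hk1.ne', Real.log_mul hk1.ne' hk2.ne']
  ring

lemma aSeq_pos (k : ℕ) : 0 < aSeq k := by
  have hanti : StrictAnti aSeq := strictAnti_nat_of_succ_lt aSeq_succ_lt
  have hle : 0 ≤ aSeq (k+1) := hanti.antitone.le_of_tendsto aSeq_tendsto (k+1)
  exact lt_of_le_of_lt hle (aSeq_succ_lt k)

/-- Lower bound on `εₙ = Hₙ − (1/2)ln(n(n+1)) − γ` by the four-term Ramanujan expansion. -/
theorem epsilon_gt_ramanujan_four_terms (n : ℕ) (hn : 0 < n)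
    (m : ℝ) (hm : m = n * (n + 1) / 2)
    (ε : ℝ) (hε : ε = (harmonic n : ℝ) - (1 / 2) * Real.log (n * (n + 1))
      - Real.eulerMascheroniConstant) :
    ε > 1 / (12 * m) - 1 / (120 * m ^ 2) + 1 / (630 * m ^ 3) - 1 / (1680 * m ^ 4) := by
  obtain ⟨k, rfl⟩ : ∃ k, n = k + 1 := ⟨n-1, (Nat.succ_pred_eq_of_pos hn).symm⟩
  have h := aSeq_pos k
  unfold aSeq fRam at h
  have hmm : ((k:ℝ)+1)*(((k:ℝ)+1)+1)/2 = m := by rw [hm]; push_cast; ring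
  rw [hmm] at h
  rw [hε, show ((k+1:ℕ):ℝ) * (((k+1:ℕ):ℝ)+1) = ((k:ℝ)+1)*((k:ℝ)+2) by push_cast; ring]
  linarith
end

section
/- For every positive integer n, with m = n(n+1)/2, the number λ_n := H_n − (1/2)·ln(2m) − γ − 1/(12m + 6/5) satisfies 0 < λ_n < 19/(25200m³). -/
open Real Finset Filter Topology

lemma logA (t : ℝ) (ht : 0 < t) (ht2 : t ≤ 1/2) :
    |Real.log (1+t) - Real.log (1-t)
      - 2*(t + t^3/3 + t^5/5 + t^7/7 + t^9/9 + t^11/11)| ≤ 4*t^13 := by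
  have h1 : |t| < 1 := by rw [abs_of_pos ht]; linarith
  have h2 : |(-t)| < 1 := by rw [abs_neg]; exact h1
  have e1 := Real.abs_log_sub_add_sum_range_le h1 12
  have e2 := Real.abs_log_sub_add_sum_range_le h2 12
  simp only [Finset.sum_range_succ, Finset.sum_range_zero] at e1 e2
  rw [abs_of_pos ht] at e1
  rw [abs_neg, abs_of_pos ht] at e2
  norm_num [sub_neg_eq_add] at e1 e2
  have hd : (0:ℝ) < 1 - t := by linarith
  have hE : t^13 / (1-t) ≤ 2*t^13 := by
    rw [div_le_iff₀ hd]; nlinarith [pow_pos ht 13]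
  rw [abs_le] at e1 e2 ⊢
  obtain ⟨a1, b1⟩ := e1
  obtain ⟨a2, b2⟩ := e2
  constructor <;> nlinarith

lemma keyA (x : ℝ) (hx : 2 ≤ x) :
    1/x + 25*x/(75*x^4 - 45*x^2 + 3) + 2/x^13
      < 1/x + (1/x)^3/3 + (1/x)^5/5 + (1/x)^7/7 + (1/x)^9/9 + (1/x)^11/11 := by
  have hx0 : (0:ℝ) < x := by linarith
  have hx2 : (4:ℝ) ≤ x^2 := by nlinarith
  have hR : (0:ℝ) < 75*x^4 - 45*x^2 + 3 := by nlinarith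
  have hy : (0:ℝ) ≤ x - 2 := by linarith
  rw [← sub_pos]
  have hid : 1/x + (1/x)^3/3 + (1/x)^5/5 + (1/x)^7/7 + (1/x)^9/9 + (1/x)^11/11
      - (1/x + 25*x/(75*x^4 - 45*x^2 + 3) + 2/x^13)
      = (25*((153238/2625) + (4748684/9625)*(x-2) + (37764361/28875)*(x-2)^2 + (2492016/1375)*(x-2)^3 + (824594/525)*(x-2)^4 + (26607844/28875)*(x-2)^5 + (10860211/28875)*(x-2)^6 + (277808/2625)*(x-2)^7 + (51563/2625)*(x-2)^8 + (76/35)*(x-2)^9 + (19/175)*(x-2)^10))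
        / ((75*x^4 - 45*x^2 + 3) * x^13) := by
    have hR' : (75*x^4 - 45*x^2 + 3) ≠ 0 := hR.ne'
    set D := 75*x^4 - 45*x^2 + 3 with hD
    field_simp
    rw [hD]
    ring
  rw [hid]
  apply div_pos _ (by positivity)
  nlinarith [pow_nonneg hy 2, pow_nonneg hy 3, pow_nonneg hy 4, pow_nonneg hy 5,
    pow_nonneg hy 6, pow_nonneg hy 7, pow_nonneg hy 8, pow_nonneg hy 9, pow_nonneg hy 10]

lemma keyB (x : ℝ) (hx : 2 ≤ x) :
    1/x + (1/x)^3/3 + (1/x)^5/5 + (1/x)^7/7 + (1/x)^9/9 + (1/x)^11/11 + 2/x^13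
      < 1/x + 25*x/(75*x^4 - 45*x^2 + 3)
        + (19/3150)*(6*x^2+2)/(x^3*(x^2-1)^3) := by
  have hx0 : (0:ℝ) < x := by linarith
  have hx2 : (4:ℝ) ≤ x^2 := by nlinarith
  have hR : (0:ℝ) < 75*x^4 - 45*x^2 + 3 := by nlinarith
  have hW : (0:ℝ) < x^2 - 1 := by nlinarith
  have hy : (0:ℝ) ≤ x - 2 := by linarith
  rw [← sub_pos]
  have hid : 1/x + 25*x/(75*x^4 - 45*x^2 + 3) + (19/3150)*(6*x^2+2)/(x^3*(x^2-1)^3)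
      - (1/x + (1/x)^3/3 + (1/x)^5/5 + (1/x)^7/7 + (1/x)^9/9 + (1/x)^11/11 + 2/x^13)
      = (25*((7557218/13125) + (302668964/48125)*(x-2) + (4186912523/144375)*(x-2)^2 + (732941624/9625)*(x-2)^3 + (3723478949/28875)*(x-2)^4 + (3105873464/20625)*(x-2)^5 + (18222987542/144375)*(x-2)^6 + (11231447888/144375)*(x-2)^7 + (1031219377/28875)*(x-2)^8 + (117855648/9625)*(x-2)^9 + (149551704/48125)*(x-2)^10 + (27394616/48125)*(x-2)^11 + (3437069/48125)*(x-2)^12 + (688/125)*(x-2)^13 + (172/875)*(x-2)^14))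
        / ((75*x^4 - 45*x^2 + 3) * x^13 * (x^2-1)^3) := by
    have h1 : (x^2-1) ≠ 0 := hW.ne'
    have hR' : (75*x^4 - 45*x^2 + 3) ≠ 0 := hR.ne'
    set D := 75*x^4 - 45*x^2 + 3 with hD
    field_simp
    rw [hD]
    ring
  rw [hid]
  apply div_pos _ (by positivity)
  nlinarith [pow_nonneg hy 2, pow_nonneg hy 3, pow_nonneg hy 4, pow_nonneg hy 5,
    pow_nonneg hy 6, pow_nonneg hy 7, pow_nonneg hy 8, pow_nonneg hy 9, pow_nonneg hy 10,
    pow_nonneg hy 11, pow_nonneg hy 12, pow_nonneg hy 13, pow_nonneg hy 14]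

noncomputable def lodgeA (k : ℕ) : ℝ :=
  (harmonic k : ℝ) - (1/2) * Real.log (k*(k+1)) - 1/(6*k*(k+1) + 6/5)

noncomputable def lodgeB (k : ℕ) : ℝ := lodgeA k - 19/(3150 * k^3 * (k+1)^3)

lemma realStep (x : ℝ) (hx : 2 ≤ x) :
    0 < (1/2)*(Real.log (x*(x+1)) - Real.log ((x-1)*x)) - 1/x
        - (1/(6*(x-1)*x + 6/5) - 1/(6*x*(x+1) + 6/5))
    ∧ (1/2)*(Real.log (x*(x+1)) - Real.log ((x-1)*x)) - 1/x
        - (1/(6*(x-1)*x + 6/5) - 1/(6*x*(x+1) + 6/5))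
      < 19/(3150*(x-1)^3*x^3) - 19/(3150*x^3*(x+1)^3) := by
  have hx0 : (0:ℝ) < x := by linarith
  have hx1 : (0:ℝ) < x - 1 := by linarith
  have hx2 : (4:ℝ) ≤ x^2 := by nlinarith
  have hR : (0:ℝ) < 75*x^4 - 45*x^2 + 3 := by nlinarith
  have hW : (0:ℝ) < x^2 - 1 := by nlinarith
  -- log difference identity
  have hlog : Real.log (x*(x+1)) - Real.log ((x-1)*x)
      = Real.log (1+1/x) - Real.log (1-1/x) := by
    have e1 : (1:ℝ)+1/x = (x+1)/x := by field_simp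
    have e2 : (1:ℝ)-1/x = (x-1)/x := by field_simp
    rw [e1, e2, Real.log_div (by linarith) hx0.ne', Real.log_div hx1.ne' hx0.ne',
      Real.log_mul hx0.ne' (by linarith), Real.log_mul hx1.ne' hx0.ne']
    ring
  -- reciprocal difference identity
  have hrec : 1/(6*(x-1)*x + 6/5) - 1/(6*x*(x+1) + 6/5) = 25*x/(75*x^4 - 45*x^2 + 3) := by
    have d1 : (0:ℝ) < 6*(x-1)*x + 6/5 := by nlinarith
    have d2 : (0:ℝ) < 6*x*(x+1) + 6/5 := by nlinarith
    have hR' : (75*x^4 - 45*x^2 + 3) ≠ 0 := hR.ne'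
    set D := 75*x^4 - 45*x^2 + 3 with hD
    field_simp
    rw [hD]
    ring
  -- B difference identity
  have hBdiff : 19/(3150*(x-1)^3*x^3) - 19/(3150*x^3*(x+1)^3)
      = (19/3150)*(6*x^2+2)/(x^3*(x^2-1)^3) := by
    have d1 : (x-1) ≠ 0 := hx1.ne'
    have d2 : (x+1) ≠ 0 := by positivity
    have d3 : (x^2-1) ≠ 0 := hW.ne'
    field_simp
    ring
  -- log series bound
  have ht : (0:ℝ) < 1/x := by positivity
  have ht2 : 1/x ≤ 1/2 := by
    rw [div_le_div_iff₀ hx0 (by norm_num)]; linarith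
  have hA := logA (1/x) ht ht2
  rw [abs_le] at hA
  have hp13 : (1/x)^13 = 1/x^13 := by rw [div_pow, one_pow]
  rw [hp13] at hA
  have hKA := keyA x hx
  have hKB := keyB x hx
  have hconv : (2:ℝ)/x^13 = 2*(1/x^13) := by ring
  rw [hconv] at hKA hKB
  rw [hlog, hrec, hBdiff]
  constructor
  · linarith [hA.1, hKA]
  · linarith [hA.2, hKB]

lemma lodgeA_cast (k : ℕ) :
    lodgeA k = (harmonic k : ℝ) - (1/2) * Real.log ((k:ℝ)*((k:ℝ)+1))
      - 1/(6*(k:ℝ)*((k:ℝ)+1) + 6/5) := by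
  simp [lodgeA]

lemma stepA (k : ℕ) (hk : 1 ≤ k) : lodgeA (k+1) < lodgeA k := by
  have hx : (2:ℝ) ≤ (k:ℝ) + 1 := by
    have : (1:ℝ) ≤ (k:ℝ) := by exact_mod_cast hk
    linarith
  have h := (realStep ((k:ℝ)+1) hx).1
  have hh : (harmonic (k+1) : ℝ) = (harmonic k : ℝ) + 1/((k:ℝ)+1) := by
    rw [harmonic_succ]; push_cast; ring
  rw [lodgeA_cast, lodgeA_cast, hh]
  push_cast
  have e1 : ((k:ℝ)+1-1) = (k:ℝ) := by ring
  rw [e1] at h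
  linarith [h]

lemma stepB (k : ℕ) (hk : 1 ≤ k) : lodgeB k < lodgeB (k+1) := by
  have hx : (2:ℝ) ≤ (k:ℝ) + 1 := by
    have : (1:ℝ) ≤ (k:ℝ) := by exact_mod_cast hk
    linarith
  have h := (realStep ((k:ℝ)+1) hx).2
  have hh : (harmonic (k+1) : ℝ) = (harmonic k : ℝ) + 1/((k:ℝ)+1) := by
    rw [harmonic_succ]; push_cast; ring
  unfold lodgeB
  rw [lodgeA_cast, lodgeA_cast, hh]
  push_cast
  have e1 : ((k:ℝ)+1-1) = (k:ℝ) := by ring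
  rw [e1] at h
  linarith [h]

lemma lodgeB_cast (k : ℕ) :
    lodgeB k = lodgeA k - 19/(3150*(k:ℝ)^3*((k:ℝ)+1)^3) := by
  simp [lodgeB]

lemma tendsto_lodgeA : Tendsto lodgeA atTop (𝓝 Real.eulerMascheroniConstant) := by
  have h1 := Real.tendsto_harmonic_sub_log
  have hlog1 : Tendsto (fun k : ℕ => Real.log (1 + 1/(k:ℝ))) atTop (𝓝 0) := by
    have h : Tendsto (fun k : ℕ => 1 + 1/(k:ℝ)) atTop (𝓝 1) := by
      simpa using tendsto_const_nhds.add (tendsto_one_div_atTop_nhds_zero_nat (𝕜 := ℝ))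
    have := (Real.continuousAt_log (by norm_num : (1:ℝ) ≠ 0)).tendsto.comp h
    simpa [Function.comp_def] using this
  have hsmall : Tendsto (fun k : ℕ => 1/(6*(k:ℝ)*((k:ℝ)+1)+6/5)) atTop (𝓝 0) := by
    have hden : Tendsto (fun k : ℕ => 6*(k:ℝ)*((k:ℝ)+1)+6/5) atTop atTop := by
      apply tendsto_atTop_mono (fun k => ?_) tendsto_natCast_atTop_atTop
      have h0 : (0:ℝ) ≤ (k:ℝ) := Nat.cast_nonneg k
      nlinarith
    simpa [one_div, Function.comp_def] using tendsto_inv_atTop_zero.comp hden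
  have hT := (h1.sub (hlog1.const_mul (1/2 : ℝ))).sub hsmall
  rw [show Real.eulerMascheroniConstant - (1/2 : ℝ)*0 - 0 = Real.eulerMascheroniConstant
    by ring] at hT
  apply hT.congr'
  filter_upwards [eventually_ge_atTop 1] with k hk
  have hk0 : (0:ℝ) < (k:ℝ) := by exact_mod_cast hk
  rw [lodgeA_cast]
  have e1 : (1:ℝ) + 1/(k:ℝ) = ((k:ℝ)+1)/(k:ℝ) := by field_simp
  rw [e1, Real.log_div (by linarith) hk0.ne', Real.log_mul hk0.ne' (by linarith)]
  ring

lemma tendsto_lodgeB : Tendsto lodgeB atTop (𝓝 Real.eulerMascheroniConstant) := by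
  have hsmall : Tendsto (fun k : ℕ => 19/(3150*(k:ℝ)^3*((k:ℝ)+1)^3)) atTop (𝓝 0) := by
    have hden : Tendsto (fun k : ℕ => 3150*(k:ℝ)^3*((k:ℝ)+1)^3) atTop atTop := by
      apply tendsto_atTop_mono (fun k => ?_) tendsto_natCast_atTop_atTop
      rcases Nat.eq_zero_or_pos k with hk | hk
      · simp [hk]
      · have h1 : (1:ℝ) ≤ (k:ℝ) := by exact_mod_cast hk
        have e1 : (k:ℝ) ≤ (k:ℝ)^3 := by nlinarith [sq_nonneg ((k:ℝ)-1), sq_nonneg ((k:ℝ)+1)]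
        have e2 : (1:ℝ) ≤ ((k:ℝ)+1)^3 := by nlinarith [sq_nonneg ((k:ℝ)+1)]
        nlinarith [mul_le_mul e1 e2 (by norm_num) (by positivity : (0:ℝ) ≤ (k:ℝ)^3)]
    have := (tendsto_inv_atTop_zero.comp hden).const_mul (19:ℝ)
    simpa [one_div, div_eq_mul_inv] using this
  have hT := tendsto_lodgeA.sub hsmall
  rw [sub_zero] at hT
  exact hT.congr (fun k => (lodgeB_cast k).symm)

lemma gamma_lt_lodgeA (n : ℕ) (hn : 1 ≤ n) : Real.eulerMascheroniConstant < lodgeA n := by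
  have anti : ∀ i, n + 1 ≤ i → lodgeA i ≤ lodgeA (n+1) := by
    intro i hi
    induction i, hi using Nat.le_induction with
    | base => exact le_rfl
    | succ i hi ih => exact le_trans (stepA i (le_trans (by omega) hi)).le ih
  have hle : Real.eulerMascheroniConstant ≤ lodgeA (n+1) :=
    le_of_tendsto tendsto_lodgeA (eventually_atTop.2 ⟨n+1, anti⟩)
  exact lt_of_le_of_lt hle (stepA n hn)

lemma lodgeB_lt_gamma (n : ℕ) (hn : 1 ≤ n) : lodgeB n < Real.eulerMascheroniConstant := by
  have mono : ∀ i, n + 1 ≤ i → lodgeB (n+1) ≤ lodgeB i := by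
    intro i hi
    induction i, hi using Nat.le_induction with
    | base => exact le_rfl
    | succ i hi ih => exact le_trans ih (stepB i (le_trans (by omega) hi)).le
  have hle : lodgeB (n+1) ≤ Real.eulerMascheroniConstant :=
    ge_of_tendsto tendsto_lodgeB (eventually_atTop.2 ⟨n+1, mono⟩)
  exact lt_of_lt_of_le (stepB n hn) hle

/-- Lodge's approximation: `λₙ = Hₙ − (1/2)ln(2m) − γ − 1/(12m + 6/5)` satisfies
`0 < λₙ < 19/(25200 m³)`. -/
theorem lodge_approximation (n : ℕ) (hn : 0 < n) (m : ℝ) (hm : m = n * (n + 1) / 2)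
    (lam : ℝ) (hlam : lam = (harmonic n : ℝ) - (1 / 2) * Real.log (2 * m)
      - Real.eulerMascheroniConstant - 1 / (12 * m + 6 / 5)) :
    0 < lam ∧ lam < 19 / (25200 * m ^ 3) := by
  have hn1 : 1 ≤ n := hn
  have h2m : 2 * m = (n:ℝ) * ((n:ℝ) + 1) := by rw [hm]; ring
  have h12m : 12 * m + 6 / 5 = 6 * (n:ℝ) * ((n:ℝ) + 1) + 6 / 5 := by rw [hm]; ring
  have hden : 25200 * m ^ 3 = 3150 * (n:ℝ)^3 * ((n:ℝ)+1)^3 := by rw [hm]; ring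
  have hlam' : lam = lodgeA n - Real.eulerMascheroniConstant := by
    rw [hlam, h2m, h12m, lodgeA_cast]; ring
  have h1 := gamma_lt_lodgeA n hn1
  have h2 := lodgeB_lt_gamma n hn1
  rw [lodgeB_cast] at h2
  constructor
  · rw [hlam']; linarith
  · rw [hlam', hden]; linarith
end

section
/- With m = n(n+1)/2 and λ_n := H_n − (1/2)·ln(2m) − γ − 1/(12m + 6/5), the constant 19/25200 in the bound 0 < λ_n < 19/(25200m³) is best possible; precisely, m³·λ_n tends to 19/25200 as n → ∞. -/
open Real Filter Topology

private lemma log_taylor_bounds (x : ℝ) (hx : 20 ≤ x) :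
    (1/2) * Real.log (1 + 2/x) ≤ (1/x - 1/x^2 + 4/(3*x^3) - 2/x^4 + 16/(5*x^5) - 16/(3*x^6) + 64/(7*x^7)) + 128/(x^7*(x-2)) ∧
    (1/x - 1/x^2 + 4/(3*x^3) - 2/x^4 + 16/(5*x^5) - 16/(3*x^6) + 64/(7*x^7)) - 128/(x^7*(x-2)) ≤ (1/2) * Real.log (1 + 2/x) := by
  have hx0 : (0:ℝ) < x := by linarith
  have hx2 : (0:ℝ) < x - 2 := by linarith
  have hne : x ≠ 0 := ne_of_gt hx0
  have h2ne : x - 2 ≠ 0 := ne_of_gt hx2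
  have h1 : |(-(2/x))| < 1 := by
    rw [abs_neg, abs_of_nonneg (by positivity)]
    rw [div_lt_one hx0]; linarith
  have h := Real.abs_log_sub_add_sum_range_le h1 7
  rw [sub_neg_eq_add] at h
  have hS : (∑ i ∈ Finset.range 7, (-(2/x))^(i+1)/(i+1)) =
      -2 * (1/x - 1/x^2 + 4/(3*x^3) - 2/x^4 + 16/(5*x^5) - 16/(3*x^6) + 64/(7*x^7)) := by
    simp [Finset.sum_range_succ]
    field_simp
    ring
  rw [hS] at h
  have habs : |(-(2/x))| = 2/x := by rw [abs_neg, abs_of_nonneg (by positivity)]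
  rw [habs] at h
  have hq : (1:ℝ) - 2/x = (x-2)/x := by field_simp
  have hB : (2/x)^8/(1 - 2/x) = 2 * (128/(x^7*(x-2))) := by
    rw [hq]; field_simp; ring
  rw [hB] at h
  rw [abs_le] at h
  constructor <;> linarith [h.1, h.2]

private lemma stepU_rat (x : ℝ) (hx : 20 ≤ x) :
    -(1/(x+1)) + ((1/x - 1/x^2 + 4/(3*x^3) - 2/x^4 + 16/(5*x^5) - 16/(3*x^6) + 64/(7*x^7)) + 128/(x^7*(x-2))) + 1/(6*(x+1)^2+6*(x+1)+6/5) - 1/(6*x^2+6*x+6/5)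
      ≤ ((19:ℝ)/3150)/(x-1)^6 + 30/(x-1)^7 - (((19:ℝ)/3150)/x^6 + 30/x^7) := by
  have hx0 : (0:ℝ) < x := by linarith
  have h1 : (0:ℝ) < x - 1 := by linarith
  have h2 : (0:ℝ) < x - 2 := by linarith
  have hp1 : (0:ℝ) < x + 1 := by linarith
  have hD0 : (0:ℝ) < 6*x^2+6*x+6/5 := by positivity
  have hD1 : (0:ℝ) < 6*(x+1)^2+6*(x+1)+6/5 := by positivity
  have ht : (0:ℝ) ≤ x - 20 := by linarith
  have hden : (0:ℝ) < (x-1)^7 * x^8 * (x+1) * (x-2) * (6*x^2+6*x+6/5) * (6*(x+1)^2+6*(x+1)+6/5) :=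
    mul_pos (mul_pos (mul_pos (mul_pos (mul_pos (pow_pos h1 7) (pow_pos hx0 8)) hp1) h2) hD0) hD1
  have hnum : (0:ℝ) ≤ 6060743768871740477952/25 + (x-20) * (136053303926230718160912/875 + (x-20) * (201278609534401597454604/4375 + (x-20) * (5196719316783365642862/625 + (x-20) * (4480347586614258581388/4375 + (x-20) * (397108920097804717126/4375 + (x-20) * (26058498792107163308/4375 + (x-20) * (1281799788898423646/4375 + (x-20) * (47262412095088132/4375 + (x-20) * (184304869636462/625 + (x-20) * (3620247962264/625 + (x-20) * (9691276138/125 + (x-20) * (79222472/125 + (x-20) * (59742/25))))))))))))) :=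
    (add_nonneg (by norm_num) (mul_nonneg ht (add_nonneg (by norm_num) (mul_nonneg ht (add_nonneg (by norm_num) (mul_nonneg ht (add_nonneg (by norm_num) (mul_nonneg ht (add_nonneg (by norm_num) (mul_nonneg ht (add_nonneg (by norm_num) (mul_nonneg ht (add_nonneg (by norm_num) (mul_nonneg ht (add_nonneg (by norm_num) (mul_nonneg ht (add_nonneg (by norm_num) (mul_nonneg ht (add_nonneg (by norm_num) (mul_nonneg ht (add_nonneg (by norm_num) (mul_nonneg ht (add_nonneg (by norm_num) (mul_nonneg ht (add_nonneg (by norm_num) (mul_nonneg ht (le_of_lt (by norm_num))))))))))))))))))))))))))))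
  have key : ((19:ℝ)/3150)/(x-1)^6 + 30/(x-1)^7 - (((19:ℝ)/3150)/x^6 + 30/x^7)
      - (-(1/(x+1)) + ((1/x - 1/x^2 + 4/(3*x^3) - 2/x^4 + 16/(5*x^5) - 16/(3*x^6) + 64/(7*x^7)) + 128/(x^7*(x-2))) + 1/(6*(x+1)^2+6*(x+1)+6/5) - 1/(6*x^2+6*x+6/5))
      = (6060743768871740477952/25 + (x-20) * (136053303926230718160912/875 + (x-20) * (201278609534401597454604/4375 + (x-20) * (5196719316783365642862/625 + (x-20) * (4480347586614258581388/4375 + (x-20) * (397108920097804717126/4375 + (x-20) * (26058498792107163308/4375 + (x-20) * (1281799788898423646/4375 + (x-20) * (47262412095088132/4375 + (x-20) * (184304869636462/625 + (x-20) * (3620247962264/625 + (x-20) * (9691276138/125 + (x-20) * (79222472/125 + (x-20) * (59742/25))))))))))))))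
        / ((x-1)^7 * x^8 * (x+1) * (x-2) * (6*x^2+6*x+6/5) * (6*(x+1)^2+6*(x+1)+6/5)) := by
    rw [eq_div_iff (ne_of_gt hden)]
    field_simp
    ring
  have h0 : (0:ℝ) ≤ ((19:ℝ)/3150)/(x-1)^6 + 30/(x-1)^7 - (((19:ℝ)/3150)/x^6 + 30/x^7)
      - (-(1/(x+1)) + ((1/x - 1/x^2 + 4/(3*x^3) - 2/x^4 + 16/(5*x^5) - 16/(3*x^6) + 64/(7*x^7)) + 128/(x^7*(x-2))) + 1/(6*(x+1)^2+6*(x+1)+6/5) - 1/(6*x^2+6*x+6/5)) := by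
    rw [key]; exact div_nonneg hnum (le_of_lt hden)
  linarith

private lemma stepL_rat (x : ℝ) (hx : 20 ≤ x) :
    ((19:ℝ)/3150)/x^6 - 30/x^7 - (((19:ℝ)/3150)/(x+1)^6 - 30/(x+1)^7)
      ≤ -(1/(x+1)) + ((1/x - 1/x^2 + 4/(3*x^3) - 2/x^4 + 16/(5*x^5) - 16/(3*x^6) + 64/(7*x^7)) - 128/(x^7*(x-2))) + 1/(6*(x+1)^2+6*(x+1)+6/5) - 1/(6*x^2+6*x+6/5) := by
  have hx0 : (0:ℝ) < x := by linarith
  have h2 : (0:ℝ) < x - 2 := by linarith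
  have hp1 : (0:ℝ) < x + 1 := by linarith
  have hD0 : (0:ℝ) < 6*x^2+6*x+6/5 := by positivity
  have hD1 : (0:ℝ) < 6*(x+1)^2+6*(x+1)+6/5 := by positivity
  have ht : (0:ℝ) ≤ x - 20 := by linarith
  have hden : (0:ℝ) < x^8 * (x+1)^7 * (x-2) * (6*x^2+6*x+6/5) * (6*(x+1)^2+6*(x+1)+6/5) :=
    mul_pos (mul_pos (mul_pos (mul_pos (pow_pos hx0 8) (pow_pos hp1 7)) h2) hD0) hD1
  have hnum : (0:ℝ) ≤ 260490205454093808768/25 + (x-20) * (5763611990978153160528/875 + (x-20) * (8293112970417549465476/4375 + (x-20) * (1437999506038781555834/4375 + (x-20) * (33492873324392662438/875 + (x-20) * (13807724768401734872/4375 + (x-20) * (165388930557157724/875 + (x-20) * (36262282045590526/4375 + (x-20) * (165135326666414/625 + (x-20) * (3733127229176/625 + (x-20) * (11364940192/125 + (x-20) * (104610358/125 + (x-20) * (88086/25)))))))))))) :=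
    (add_nonneg (by norm_num) (mul_nonneg ht (add_nonneg (by norm_num) (mul_nonneg ht (add_nonneg (by norm_num) (mul_nonneg ht (add_nonneg (by norm_num) (mul_nonneg ht (add_nonneg (by norm_num) (mul_nonneg ht (add_nonneg (by norm_num) (mul_nonneg ht (add_nonneg (by norm_num) (mul_nonneg ht (add_nonneg (by norm_num) (mul_nonneg ht (add_nonneg (by norm_num) (mul_nonneg ht (add_nonneg (by norm_num) (mul_nonneg ht (add_nonneg (by norm_num) (mul_nonneg ht (add_nonneg (by norm_num) (mul_nonneg ht (le_of_lt (by norm_num))))))))))))))))))))))))))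
  have key : -(1/(x+1)) + ((1/x - 1/x^2 + 4/(3*x^3) - 2/x^4 + 16/(5*x^5) - 16/(3*x^6) + 64/(7*x^7)) - 128/(x^7*(x-2))) + 1/(6*(x+1)^2+6*(x+1)+6/5) - 1/(6*x^2+6*x+6/5)
      - (((19:ℝ)/3150)/x^6 - 30/x^7 - (((19:ℝ)/3150)/(x+1)^6 - 30/(x+1)^7))
      = (260490205454093808768/25 + (x-20) * (5763611990978153160528/875 + (x-20) * (8293112970417549465476/4375 + (x-20) * (1437999506038781555834/4375 + (x-20) * (33492873324392662438/875 + (x-20) * (13807724768401734872/4375 + (x-20) * (165388930557157724/875 + (x-20) * (36262282045590526/4375 + (x-20) * (165135326666414/625 + (x-20) * (3733127229176/625 + (x-20) * (11364940192/125 + (x-20) * (104610358/125 + (x-20) * (88086/25)))))))))))))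
        / (x^8 * (x+1)^7 * (x-2) * (6*x^2+6*x+6/5) * (6*(x+1)^2+6*(x+1)+6/5)) := by
    rw [eq_div_iff (ne_of_gt hden)]
    field_simp
    ring
  have h0 : (0:ℝ) ≤ -(1/(x+1)) + ((1/x - 1/x^2 + 4/(3*x^3) - 2/x^4 + 16/(5*x^5) - 16/(3*x^6) + 64/(7*x^7)) - 128/(x^7*(x-2))) + 1/(6*(x+1)^2+6*(x+1)+6/5) - 1/(6*x^2+6*x+6/5)
      - (((19:ℝ)/3150)/x^6 - 30/x^7 - (((19:ℝ)/3150)/(x+1)^6 - 30/(x+1)^7)) := by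
    rw [key]; exact div_nonneg hnum (le_of_lt hden)
  linarith

noncomputable def lodgeF (n : ℕ) : ℝ :=
  (harmonic n : ℝ) - (1/2) * Real.log ((n:ℝ) * ((n:ℝ)+1)) - 1/(6*(n:ℝ)^2+6*(n:ℝ)+6/5)

noncomputable def lodgeU (n : ℕ) : ℝ := ((19:ℝ)/3150)/((n:ℝ)-1)^6 + 30/((n:ℝ)-1)^7

noncomputable def lodgeL (n : ℕ) : ℝ := ((19:ℝ)/3150)/(n:ℝ)^6 - 30/(n:ℝ)^7

private lemma lodgeF_sub_succ (n : ℕ) (hn : 20 ≤ n) :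
    lodgeF n - lodgeF (n+1) = -(1/((n:ℝ)+1)) + (1/2) * Real.log (1 + 2/(n:ℝ))
      + 1/(6*((n:ℝ)+1)^2+6*((n:ℝ)+1)+6/5) - 1/(6*(n:ℝ)^2+6*(n:ℝ)+6/5) := by
  have hx0 : (0:ℝ) < (n:ℝ) := by
    have : 0 < n := by omega
    exact_mod_cast this
  set x : ℝ := (n:ℝ) with hxdef
  have hcast : ((n+1 : ℕ) : ℝ) = x + 1 := by push_cast; ring
  have hharm : ((harmonic (n+1) : ℚ) : ℝ) = (harmonic n : ℝ) + 1/(x+1) := by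
    rw [harmonic_succ]; push_cast; ring
  have hlog : Real.log ((x+1) * ((x+1)+1)) - Real.log (x * (x+1)) = Real.log (1 + 2/x) := by
    rw [← Real.log_div (by positivity) (by positivity)]
    congr 1
    field_simp
    ring
  unfold lodgeF
  rw [hcast, hharm]
  have hlog2 : (1:ℝ)/2 * Real.log ((x+1)*((x+1)+1)) = 1/2 * Real.log (x*(x+1)) + 1/2 * Real.log (1+2/x) := by
    rw [← hlog]; ring
  rw [hlog2]
  ring

private lemma lodgeF_stepU (n : ℕ) (hn : 20 ≤ n) :
    lodgeF n - lodgeF (n+1) ≤ lodgeU n - lodgeU (n+1) := by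
  have hx : (20:ℝ) ≤ (n:ℝ) := by exact_mod_cast hn
  have hlog := (log_taylor_bounds (n:ℝ) hx).1
  have hstep := stepU_rat (n:ℝ) hx
  rw [lodgeF_sub_succ n hn]
  unfold lodgeU
  have hcast : ((n+1 : ℕ) : ℝ) = (n:ℝ) + 1 := by push_cast; ring
  rw [hcast]
  have h1 : ((n:ℝ)+1) - 1 = (n:ℝ) := by ring
  rw [h1]
  linarith

private lemma lodgeF_stepL (n : ℕ) (hn : 20 ≤ n) :
    lodgeL n - lodgeL (n+1) ≤ lodgeF n - lodgeF (n+1) := by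
  have hx : (20:ℝ) ≤ (n:ℝ) := by exact_mod_cast hn
  have hlog := (log_taylor_bounds (n:ℝ) hx).2
  have hstep := stepL_rat (n:ℝ) hx
  rw [lodgeF_sub_succ n hn]
  unfold lodgeL
  have hcast : ((n+1 : ℕ) : ℝ) = (n:ℝ) + 1 := by push_cast; ring
  rw [hcast]
  linarith

private lemma tendsto_lodgeF :
    Tendsto lodgeF atTop (𝓝 Real.eulerMascheroniConstant) := by
  have h1 := Real.tendsto_harmonic_sub_log
  have h2 : Tendsto (fun n : ℕ => (1/2) * Real.log (1 + 1/(n:ℝ))) atTop (𝓝 0) := by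
    have hx : Tendsto (fun x : ℝ => Real.log (1 + 1/x)) atTop (𝓝 0) := by
      have hdiv : Tendsto (fun x : ℝ => (1:ℝ) + 1/x) atTop (𝓝 1) := by
        have h := (tendsto_inv_atTop_zero (𝕜 := ℝ)).const_add (1:ℝ)
        simpa [one_div] using h
      have hl := hdiv.log one_ne_zero
      simpa using hl
    have := (hx.comp tendsto_natCast_atTop_atTop).const_mul (1/2 : ℝ)
    simpa using this
  have h3 : Tendsto (fun n : ℕ => 1/(6*(n:ℝ)^2+6*(n:ℝ)+6/5)) atTop (𝓝 0) := by
    have hA : Tendsto (fun n : ℕ => 6*(n:ℝ)^2+6*(n:ℝ)+6/5) atTop atTop := by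
      apply tendsto_atTop_mono (fun n : ℕ => ?_) tendsto_natCast_atTop_atTop
      have h0 : (0:ℝ) ≤ (n:ℝ) := Nat.cast_nonneg n
      nlinarith
    simp only [one_div]; exact hA.inv_tendsto_atTop
  have hsum := (h1.sub h2).sub h3
  rw [sub_zero, sub_zero] at hsum
  apply hsum.congr'
  filter_upwards [eventually_ge_atTop 1] with n hn
  have hx0 : (0:ℝ) < (n:ℝ) := by exact_mod_cast hn
  have hlog : Real.log ((n:ℝ) * ((n:ℝ)+1)) = 2 * Real.log (n:ℝ) + Real.log (1 + 1/(n:ℝ)) := by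
    have hrw : (n:ℝ) * ((n:ℝ)+1) = (n:ℝ) * (n:ℝ) * (1 + 1/(n:ℝ)) := by field_simp
    rw [hrw, Real.log_mul (by positivity) (by positivity), Real.log_mul (by positivity) (by positivity)]
    ring
  unfold lodgeF
  rw [hlog]
  ring

private lemma tendsto_lodgeU : Tendsto lodgeU atTop (𝓝 0) := by
  have hb : Tendsto (fun n : ℕ => (n:ℝ) - 1) atTop atTop :=
    tendsto_atTop_add_const_right atTop (-1) tendsto_natCast_atTop_atTop
  have h6 : Tendsto (fun n : ℕ => ((n:ℝ) - 1)^6) atTop atTop := (tendsto_pow_atTop (by norm_num)).comp hb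
  have h7 : Tendsto (fun n : ℕ => ((n:ℝ) - 1)^7) atTop atTop := (tendsto_pow_atTop (by norm_num)).comp hb
  have hA : Tendsto (fun n : ℕ => ((19:ℝ)/3150)/((n:ℝ)-1)^6) atTop (𝓝 0) :=
    tendsto_const_nhds.div_atTop h6
  have hB : Tendsto (fun n : ℕ => (30:ℝ)/((n:ℝ)-1)^7) atTop (𝓝 0) :=
    tendsto_const_nhds.div_atTop h7
  have := hA.add hB
  rw [add_zero] at this; exact this

private lemma tendsto_lodgeL : Tendsto lodgeL atTop (𝓝 0) := by
  have hb : Tendsto (fun n : ℕ => (n:ℝ)) atTop atTop := tendsto_natCast_atTop_atTop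
  have h6 : Tendsto (fun n : ℕ => (n:ℝ)^6) atTop atTop := (tendsto_pow_atTop (by norm_num)).comp hb
  have h7 : Tendsto (fun n : ℕ => (n:ℝ)^7) atTop atTop := (tendsto_pow_atTop (by norm_num)).comp hb
  have hA : Tendsto (fun n : ℕ => ((19:ℝ)/3150)/(n:ℝ)^6) atTop (𝓝 0) :=
    tendsto_const_nhds.div_atTop h6
  have hB : Tendsto (fun n : ℕ => (30:ℝ)/(n:ℝ)^7) atTop (𝓝 0) :=
    tendsto_const_nhds.div_atTop h7
  have := hA.sub hB
  rw [sub_zero] at this; exact this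

private lemma lodgeF_le (n : ℕ) (hn : 20 ≤ n) :
    lodgeF n - Real.eulerMascheroniConstant ≤ lodgeU n := by
  have mono : ∀ m, n ≤ m → lodgeF n - lodgeU n ≤ lodgeF m - lodgeU m := by
    intro m hm
    induction m, hm using Nat.le_induction with
    | base => exact le_refl _
    | succ m hm ih =>
      have := lodgeF_stepU m (le_trans hn hm)
      linarith
  have hlim : Tendsto (fun m => lodgeF m - lodgeU m) atTop
      (𝓝 (Real.eulerMascheroniConstant - 0)) := tendsto_lodgeF.sub tendsto_lodgeU
  rw [sub_zero] at hlim
  have := ge_of_tendsto hlim (eventually_atTop.2 ⟨n, mono⟩)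
  linarith

private lemma lodgeF_ge (n : ℕ) (hn : 20 ≤ n) :
    lodgeL n ≤ lodgeF n - Real.eulerMascheroniConstant := by
  have mono : ∀ m, n ≤ m → lodgeF m - lodgeL m ≤ lodgeF n - lodgeL n := by
    intro m hm
    induction m, hm using Nat.le_induction with
    | base => exact le_refl _
    | succ m hm ih =>
      have := lodgeF_stepL m (le_trans hn hm)
      linarith
  have hlim : Tendsto (fun m => lodgeF m - lodgeL m) atTop
      (𝓝 (Real.eulerMascheroniConstant - 0)) := tendsto_lodgeF.sub tendsto_lodgeL
  rw [sub_zero] at hlim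
  have := le_of_tendsto hlim (eventually_atTop.2 ⟨n, mono⟩)
  linarith

private lemma tendsto_inv_nat_sub_one : Tendsto (fun n : ℕ => 1/((n:ℝ)-1)) atTop (𝓝 0) := by
  have hb : Tendsto (fun n : ℕ => (n:ℝ) - 1) atTop atTop :=
    tendsto_atTop_add_const_right atTop (-1) tendsto_natCast_atTop_atTop
  exact tendsto_const_nhds.div_atTop hb

private lemma tendsto_q : Tendsto (fun n : ℕ => (n:ℝ)^6/((n:ℝ)-1)^6) atTop (𝓝 1) := by
  have h1 : Tendsto (fun n : ℕ => (n:ℝ)/((n:ℝ)-1)) atTop (𝓝 1) := by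
    have hadd : Tendsto (fun n : ℕ => (1:ℝ) + 1/((n:ℝ)-1)) atTop (𝓝 (1 + 0)) :=
      tendsto_const_nhds.add tendsto_inv_nat_sub_one
    rw [add_zero] at hadd
    apply hadd.congr'
    filter_upwards [eventually_ge_atTop 2] with n hn
    have h2 : (2:ℝ) ≤ (n:ℝ) := by exact_mod_cast hn
    have hne : (n:ℝ) - 1 ≠ 0 := by intro h; nlinarith
    field_simp; ring
  have hp := h1.pow 6
  rw [one_pow] at hp
  apply hp.congr'
  filter_upwards [] with n
  rw [div_pow]

private lemma tendsto_main_aux :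
    Tendsto (fun n : ℕ => (n:ℝ)^6 * (lodgeF n - Real.eulerMascheroniConstant))
      atTop (𝓝 (19/3150)) := by
  apply tendsto_of_tendsto_of_tendsto_of_le_of_le'
    (g := fun n : ℕ => (19:ℝ)/3150 - 30/(n:ℝ))
    (h := fun n : ℕ => ((19:ℝ)/3150) * ((n:ℝ)^6/((n:ℝ)-1)^6) + 30 * ((n:ℝ)^6/((n:ℝ)-1)^6) * (1/((n:ℝ)-1)))
  · have h30 : Tendsto (fun n : ℕ => (30:ℝ)/(n:ℝ)) atTop (𝓝 0) :=
      tendsto_const_nhds.div_atTop tendsto_natCast_atTop_atTop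
    have hsub : Tendsto (fun n : ℕ => (19:ℝ)/3150 - 30/(n:ℝ)) atTop (𝓝 ((19:ℝ)/3150 - 0)) :=
      tendsto_const_nhds.sub h30
    rw [sub_zero] at hsub
    exact hsub
  · have := (tendsto_q.const_mul ((19:ℝ)/3150)).add
      ((tendsto_q.const_mul (30:ℝ)).mul tendsto_inv_nat_sub_one)
    simpa using this
  · filter_upwards [eventually_ge_atTop 20] with n hn
    have hx : (20:ℝ) ≤ (n:ℝ) := by exact_mod_cast hn
    have hx0 : (0:ℝ) < (n:ℝ) := by linarith
    have hne : (n:ℝ) ≠ 0 := ne_of_gt hx0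
    have hge := lodgeF_ge n hn
    have h6 : (0:ℝ) ≤ (n:ℝ)^6 := by positivity
    have hmul := mul_le_mul_of_nonneg_left hge h6
    have hid : (n:ℝ)^6 * lodgeL n = (19:ℝ)/3150 - 30/(n:ℝ) := by
      unfold lodgeL; field_simp
    rw [hid] at hmul
    exact hmul
  · filter_upwards [eventually_ge_atTop 20] with n hn
    have hx : (20:ℝ) ≤ (n:ℝ) := by exact_mod_cast hn
    have hx0 : (0:ℝ) < (n:ℝ) := by linarith
    have h1 : (0:ℝ) < (n:ℝ) - 1 := by linarith
    have hne1 : (n:ℝ) - 1 ≠ 0 := ne_of_gt h1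
    have hle := lodgeF_le n hn
    have h6 : (0:ℝ) ≤ (n:ℝ)^6 := by positivity
    have hmul := mul_le_mul_of_nonneg_left hle h6
    have hid : (n:ℝ)^6 * lodgeU n
        = ((19:ℝ)/3150) * ((n:ℝ)^6/((n:ℝ)-1)^6) + 30 * ((n:ℝ)^6/((n:ℝ)-1)^6) * (1/((n:ℝ)-1)) := by
      unfold lodgeU
      field_simp
    rw [hid] at hmul
    exact hmul

/-- The constant `19/25200` in Lodge's bound is best possible: `m³·λₙ → 19/25200`. -/
theorem lodge_constant_best_possible :
    Tendsto (fun n : ℕ =>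
        ((n : ℝ) * (n + 1) / 2) ^ 3 *
          ((harmonic n : ℝ) - (1 / 2) * Real.log (2 * ((n : ℝ) * (n + 1) / 2))
            - Real.eulerMascheroniConstant - 1 / (12 * ((n : ℝ) * (n + 1) / 2) + 6 / 5)))
      atTop (𝓝 (19 / 25200)) := by
  have hcube : Tendsto (fun n : ℕ => ((1 + 1/(n:ℝ))^3/8)) atTop (𝓝 (1/8)) := by
    have h0 : Tendsto (fun n : ℕ => 1/(n:ℝ)) atTop (𝓝 0) :=
      tendsto_const_nhds.div_atTop tendsto_natCast_atTop_atTop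
    have h1 : Tendsto (fun n : ℕ => (1:ℝ) + 1/(n:ℝ)) atTop (𝓝 1) := by
      have hadd : Tendsto (fun n : ℕ => (1:ℝ) + 1/(n:ℝ)) atTop (𝓝 (1 + 0)) :=
        tendsto_const_nhds.add h0
      simpa using hadd
    have hpow := (h1.pow 3).div_const 8
    rw [show ((1:ℝ)^3/8) = 1/8 by norm_num] at hpow
    exact hpow
  have hmain := hcube.mul tendsto_main_aux
  have hval : (1/8 : ℝ) * (19/3150) = 19/25200 := by norm_num
  rw [hval] at hmain
  apply hmain.congr'
  filter_upwards [eventually_ge_atTop 1] with n hn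
  have hx0 : (0:ℝ) < (n:ℝ) := by exact_mod_cast hn
  have hne : (n:ℝ) ≠ 0 := ne_of_gt hx0
  show (1 + 1/(n:ℝ))^3/8 * ((n:ℝ)^6 * (lodgeF n - Real.eulerMascheroniConstant)) = _
  unfold lodgeF
  have hlogarg : (2:ℝ) * ((n:ℝ) * ((n:ℝ)+1) / 2) = (n:ℝ) * ((n:ℝ)+1) := by ring
  rw [show Real.log (2 * ((n:ℝ) * ((n:ℝ)+1) / 2)) = Real.log ((n:ℝ) * ((n:ℝ)+1)) from by rw [hlogarg]]
  field_simp
  ring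
end

section
/- For every positive integer n, with m = n(n+1)/2, define Λ_n := 1/(H_n − (1/2)·ln(2m) − γ) − 12m (this is well defined since H_n − (1/2)·ln(2m) − γ > 0). Then the number δ_n := m³·(6/5 − 19/(175m) + 13/(250m²) − Λ_n) satisfies 0 < δ_n < 187969/4042500. -/
open Real Filter Topology

set_option maxHeartbeats 1600000

noncomputable def psiF (x : ℝ) : ℝ :=
  ((-4719) + (-3465)*x + (5654)*x^2 + (-4095)*x^3 + (3822)*x^4 + (-5005)*x^5 + (6006)*x^6 + (-6435)*x^7 + (7150)*x^8 + (-9009)*x^9 + (12012)*x^10 + (-15015)*x^11 + (15015)*x^12) / (90090*x^14)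
noncomputable def rhoF (x : ℝ) : ℝ := 1/(5*(x+1)^13)
noncomputable def philF (x : ℝ) : ℝ := psiF x - rhoF x
noncomputable def phiuF (x : ℝ) : ℝ := psiF x + rhoF x
noncomputable def SF (x : ℝ) : ℝ :=
  ((3465) + (4095)*x^2 + (5005)*x^4 + (6435)*x^6 + (9009)*x^8 + (15015)*x^10 + (45045)*x^12) / (45045*x^13)
noncomputable def DD (k : ℕ) : ℝ :=
  (harmonic k : ℝ) - Real.log ((k:ℝ) * ((k:ℝ)+1)) / 2 - Real.eulerMascheroniConstant

lemma log_bound {x : ℝ} (hx : 2 ≤ x) :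
    |Real.log ((x+1)/(x-1)) / 2 - SF x| ≤ 1/(x^14*(x-1)) := by
  have hx0 : (0:ℝ) < x := by linarith
  have hx1 : (0:ℝ) < x - 1 := by linarith
  have hx2 : (0:ℝ) < x + 1 := by linarith
  have hyp : (0:ℝ) < 1/x := by positivity
  have hy : |1/x| < 1 := by
    rw [abs_of_pos hyp, div_lt_one hx0]; linarith
  have hy' : |(-(1/x))| < 1 := by rwa [abs_neg]
  have h1 := Real.abs_log_sub_add_sum_range_le hy 14
  have h2 := Real.abs_log_sub_add_sum_range_le hy' 14
  have e1 : (1:ℝ) - 1/x = (x-1)/x := by field_simp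
  have e2 : (1:ℝ) - (-(1/x)) = (x+1)/x := by field_simp; ring
  rw [e1] at h1
  rw [e2, abs_neg] at h2
  have hlog : Real.log ((x+1)/(x-1)) = Real.log ((x+1)/x) - Real.log ((x-1)/x) := by
    rw [← Real.log_div (by positivity) (by positivity)]
    congr 1
    field_simp
  have hsum : (∑ i ∈ Finset.range 14, (1/x)^(i+1)/(i+1))
      - (∑ i ∈ Finset.range 14, (-(1/x))^(i+1)/(i+1)) = 2 * SF x := by
    simp [Finset.sum_range_succ, SF]
    field_simp
    ring
  have hE : |1/x|^15/(1-|1/x|) = 1/(x^14*(x-1)) := by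
    rw [abs_of_pos hyp, e1]
    field_simp
  rw [hE] at h1 h2
  set P1 := ∑ i ∈ Finset.range 14, (1/x)^(i+1)/(i+1) with hP1
  set P2 := ∑ i ∈ Finset.range 14, (-(1/x))^(i+1)/(i+1) with hP2
  have hexpr : Real.log ((x+1)/(x-1))/2 - SF x
      = ((P2 + Real.log ((x+1)/x)) - (P1 + Real.log ((x-1)/x)))/2 := by
    rw [hlog]; linarith [hsum]
  rw [hexpr]
  have htri : |(P2 + Real.log ((x+1)/x)) - (P1 + Real.log ((x-1)/x))|
      ≤ |P2 + Real.log ((x+1)/x)| + |P1 + Real.log ((x-1)/x)| := abs_sub _ _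
  rw [abs_div, abs_of_pos (by norm_num : (0:ℝ) < 2)] at *
  linarith

lemma step_lower {x : ℝ} (hx : 5 ≤ x) :
    philF (x-1) - philF x ≤ SF x - 1/x - 1/(x^14*(x-1)) := by
  have hx0 : (0:ℝ) < x := by linarith
  have hx1 : (0:ℝ) < x - 1 := by linarith
  have hx2 : (0:ℝ) < x + 1 := by linarith
  have ht : (0:ℝ) ≤ x - 5 := by linarith
  have key : (SF x - 1/x - 1/(x^14*(x-1))) - (philF (x-1) - philF x)
      = (326511719602970176659456 + 1785356033975661268242432*(x-5) + 4755756676154995664437248*(x-5)^2 + 8206306415927323456481280*(x-5)^3 + 10288704604572149466926592*(x-5)^4 + 9965576410060934227458816*(x-5)^5 + 7742228827822942027790592*(x-5)^6 + 4945602402952319770361856*(x-5)^7 + 2642562905658607666586592*(x-5)^8 + 1195642937125305333390960*(x-5)^9 + 462139845802140214998432*(x-5)^10 + 153555351192663529619016*(x-5)^11 + 44048960101323772063794*(x-5)^12 + 10937653548814666384749*(x-5)^13 + 2353577659402628489703*(x-5)^14 + 438772748349333461421*(x-5)^15 + 70751325617903845682*(x-5)^16 + 9836262935324623551*(x-5)^17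 + 1173247638090579077*(x-5)^18 + 119225154770712471*(x-5)^19 + 10222637552826452*(x-5)^20 + 729827328309651*(x-5)^21 + 42596600410221*(x-5)^22 + 1980163181997*(x-5)^23 + 70518812364*(x-5)^24 + 1806881076*(x-5)^25 + 29657628*(x-5)^26 + 234234*(x-5)^27) / (90090 * (x^14*(x-1)^14*(x+1)^13)) := by
    have hxm : x - 1 + 1 = x := by ring
    simp only [phiuF, philF, psiF, rhoF, SF, hxm]
    rw [eq_div_iff (by positivity)]
    field_simp
    ring
  have hnum : (0:ℝ) < 326511719602970176659456 + 1785356033975661268242432*(x-5) + 4755756676154995664437248*(x-5)^2 + 8206306415927323456481280*(x-5)^3 + 10288704604572149466926592*(x-5)^4 + 9965576410060934227458816*(x-5)^5 + 7742228827822942027790592*(x-5)^6 + 4945602402952319770361856*(x-5)^7 + 2642562905658607666586592*(x-5)^8 + 1195642937125305333390960*(x-5)^9 + 462139845802140214998432*(x-5)^10 + 153555351192663529619016*(x-5)^11 + 44048960101323772063794*(x-5)^12 + 10937653548814666384749*(x-5)^13 + 2353577659402628489703*(x-5)^14 + 438772748349333461421*(x-5)^15 + 70751325617903845682*(x-5)^16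 + 9836262935324623551*(x-5)^17 + 1173247638090579077*(x-5)^18 + 119225154770712471*(x-5)^19 + 10222637552826452*(x-5)^20 + 729827328309651*(x-5)^21 + 42596600410221*(x-5)^22 + 1980163181997*(x-5)^23 + 70518812364*(x-5)^24 + 1806881076*(x-5)^25 + 29657628*(x-5)^26 + 234234*(x-5)^27 := by
    linarith [pow_nonneg ht 2, pow_nonneg ht 3, pow_nonneg ht 4, pow_nonneg ht 5, pow_nonneg ht 6, pow_nonneg ht 7, pow_nonneg ht 8, pow_nonneg ht 9, pow_nonneg ht 10, pow_nonneg ht 11, pow_nonneg ht 12, pow_nonneg ht 13, pow_nonneg ht 14, pow_nonneg ht 15, pow_nonneg ht 16, pow_nonneg ht 17, pow_nonneg ht 18, pow_nonneg ht 19, pow_nonneg ht 20, pow_nonneg ht 21, pow_nonneg ht 22, pow_nonneg ht 23, pow_nonneg ht 24, pow_nonneg ht 25, pow_nonneg ht 26, pow_nonneg ht 27]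
  linarith [key, div_pos hnum (by positivity : (0:ℝ) < 90090 * (x^14*(x-1)^14*(x+1)^13))]

lemma step_upper {x : ℝ} (hx : 5 ≤ x) :
    SF x - 1/x + 1/(x^14*(x-1)) ≤ phiuF (x-1) - phiuF x := by
  have hx0 : (0:ℝ) < x := by linarith
  have hx1 : (0:ℝ) < x - 1 := by linarith
  have hx2 : (0:ℝ) < x + 1 := by linarith
  have ht : (0:ℝ) ≤ x - 5 := by linarith
  have key : (phiuF (x-1) - phiuF x) - (SF x - 1/x + 1/(x^14*(x-1)))
      = (88223904471094341525504 + 693241579189960249503744*(x-5) + 2358649194637726951981056*(x-5)^2 + 4853004069210020755494912*(x-5)^3 + 6932302678090868060975616*(x-5)^4 + 7407402681931613637149952*(x-5)^5 + 6199538872240383422088960*(x-5)^6 + 4190604570904355883122688*(x-5)^7 + 2337394354054962154396704*(x-5)^8 + 1092511453345340718203280*(x-5)^9 + 432750368898568940570208*(x-5)^10 + 146453551795596817350072*(x-5)^11 + 42589137005231698764558*(x-5)^12 + 10682128683971145025587*(x-5)^13 + 2315531125485117617205*(x-5)^14 + 433969219419555684507*(x-5)^15 + 70239954744874619938*(x-5)^16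 + 9790749049973710065*(x-5)^17 + 1169902241695107895*(x-5)^18 + 119025613712046561*(x-5)^19 + 10213221562897600*(x-5)^20 + 729489025994157*(x-5)^21 + 42587904711495*(x-5)^22 + 1980020749707*(x-5)^23 + 70517695248*(x-5)^24 + 1806881076*(x-5)^25 + 29657628*(x-5)^26 + 234234*(x-5)^27) / (90090 * (x^14*(x-1)^14*(x+1)^13)) := by
    have hxm : x - 1 + 1 = x := by ring
    simp only [phiuF, philF, psiF, rhoF, SF, hxm]
    rw [eq_div_iff (by positivity)]
    field_simp
    ring
  have hnum : (0:ℝ) < 88223904471094341525504 + 693241579189960249503744*(x-5) + 2358649194637726951981056*(x-5)^2 + 4853004069210020755494912*(x-5)^3 + 6932302678090868060975616*(x-5)^4 + 7407402681931613637149952*(x-5)^5 + 6199538872240383422088960*(x-5)^6 + 4190604570904355883122688*(x-5)^7 + 2337394354054962154396704*(x-5)^8 + 1092511453345340718203280*(x-5)^9 + 432750368898568940570208*(x-5)^10 + 146453551795596817350072*(x-5)^11 + 42589137005231698764558*(x-5)^12 + 10682128683971145025587*(x-5)^13 + 2315531125485117617205*(x-5)^14 + 433969219419555684507*(x-5)^15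 + 70239954744874619938*(x-5)^16 + 9790749049973710065*(x-5)^17 + 1169902241695107895*(x-5)^18 + 119025613712046561*(x-5)^19 + 10213221562897600*(x-5)^20 + 729489025994157*(x-5)^21 + 42587904711495*(x-5)^22 + 1980020749707*(x-5)^23 + 70517695248*(x-5)^24 + 1806881076*(x-5)^25 + 29657628*(x-5)^26 + 234234*(x-5)^27 := by
    linarith [pow_nonneg ht 2, pow_nonneg ht 3, pow_nonneg ht 4, pow_nonneg ht 5, pow_nonneg ht 6, pow_nonneg ht 7, pow_nonneg ht 8, pow_nonneg ht 9, pow_nonneg ht 10, pow_nonneg ht 11, pow_nonneg ht 12, pow_nonneg ht 13, pow_nonneg ht 14, pow_nonneg ht 15, pow_nonneg ht 16, pow_nonneg ht 17, pow_nonneg ht 18, pow_nonneg ht 19, pow_nonneg ht 20, pow_nonneg ht 21, pow_nonneg ht 22, pow_nonneg ht 23, pow_nonneg ht 24, pow_nonneg ht 25, pow_nonneg ht 26, pow_nonneg ht 27]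
  linarith [key, div_pos hnum (by positivity : (0:ℝ) < 90090 * (x^14*(x-1)^14*(x+1)^13))]

lemma phil_pos {x : ℝ} (hx : 4 ≤ x) :
    0 < philF x := by
  have hx0 : (0:ℝ) < x := by linarith
  have hx1 : (0:ℝ) < x - 1 := by linarith
  have hx2 : (0:ℝ) < x + 1 := by linarith
  have ht : (0:ℝ) ≤ x - 4 := by linarith
  have key : philF x
      = (243590911116699094417 + 1377355689656615775772*(x-4) + 3736270514567952784067*(x-4)^2 + 6471741157664476221567*(x-4)^3 + 8037569449182630014632*(x-4)^4 + 7618667449644738054191*(x-4)^5 + 5728306905803916291806*(x-4)^6 + 3505204549586963846766*(x-4)^7 + 1777010304465853326441*(x-4)^8 + 755879404595173816386*(x-4)^9 + 272201390315467415517*(x-4)^10 + 83496463800983564097*(x-4)^11 + 21900551072186348627*(x-4)^12 + 4921029044604385721*(x-4)^13 + 947262824082550909*(x-4)^14 + 155917024633853755*(x-4)^15 + 21860257551879786*(x-4)^16 + 2594720342999031*(x-4)^17 + 258410184514196*(x-4)^18 + 21321389524292*(x-4)^19 + 1431719862001*(x-4)^20 + 76258795756*(x-4)^21 + 3100047951*(x-4)^22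 + 90357267*(x-4)^23 + 1681680*(x-4)^24 + 15015*(x-4)^25) / (90090 * (x^14*(x+1)^13)) := by
    simp only [phiuF, philF, psiF, rhoF, SF]
    rw [eq_div_iff (by positivity)]
    field_simp
    ring
  have hnum : (0:ℝ) < 243590911116699094417 + 1377355689656615775772*(x-4) + 3736270514567952784067*(x-4)^2 + 6471741157664476221567*(x-4)^3 + 8037569449182630014632*(x-4)^4 + 7618667449644738054191*(x-4)^5 + 5728306905803916291806*(x-4)^6 + 3505204549586963846766*(x-4)^7 + 1777010304465853326441*(x-4)^8 + 755879404595173816386*(x-4)^9 + 272201390315467415517*(x-4)^10 + 83496463800983564097*(x-4)^11 + 21900551072186348627*(x-4)^12 + 4921029044604385721*(x-4)^13 + 947262824082550909*(x-4)^14 + 155917024633853755*(x-4)^15 + 21860257551879786*(x-4)^16 + 2594720342999031*(x-4)^17 + 258410184514196*(x-4)^18 + 21321389524292*(x-4)^19 + 1431719862001*(x-4)^20 + 76258795756*(x-4)^21 + 3100047951*(x-4)^22 + 90357267*(x-4)^23 + 1681680*(x-4)^24 + 15015*(x-4)^25 := by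
    linarith [pow_nonneg ht 2, pow_nonneg ht 3, pow_nonneg ht 4, pow_nonneg ht 5, pow_nonneg ht 6, pow_nonneg ht 7, pow_nonneg ht 8, pow_nonneg ht 9, pow_nonneg ht 10, pow_nonneg ht 11, pow_nonneg ht 12, pow_nonneg ht 13, pow_nonneg ht 14, pow_nonneg ht 15, pow_nonneg ht 16, pow_nonneg ht 17, pow_nonneg ht 18, pow_nonneg ht 19, pow_nonneg ht 20, pow_nonneg ht 21, pow_nonneg ht 22, pow_nonneg ht 23, pow_nonneg ht 24, pow_nonneg ht 25]
  linarith [key, div_pos hnum (by positivity : (0:ℝ) < 90090 * (x^14*(x+1)^13))]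

lemma phiu_le {x : ℝ} (hx : 4 ≤ x) :
    phiuF x ≤ 1/x := by
  have hx0 : (0:ℝ) < x := by linarith
  have hx1 : (0:ℝ) < x - 1 := by linarith
  have hx2 : (0:ℝ) < x + 1 := by linarith
  have ht : (0:ℝ) ≤ x - 4 := by linarith
  have key : 1/x - phiuF x
      = (7136581879209960813167 + 41796655156486693900772*(x-4) + 117630671126414925440317*(x-4)^2 + 211772883785718402002817*(x-4)^3 + 273897716144993098764632*(x-4)^4 + 270945177642995126335441*(x-4)^5 + 213098135853235232854306*(x-4)^6 + 136751271459878575909266*(x-4)^7 + 72912855694735789495191*(x-4)^8 + 32721437340899646653886*(x-4)^9 + 12475803563845704063267*(x-4)^10 + 4067914983640307813247*(x-4)^11 + 1139322304430614726357*(x-4)^12 + 274779653305999923073*(x-4)^13 + 57113879951060090225*(x-4)^14 + 10222611593971473425*(x-4)^15 + 1571640361719420954*(x-4)^16 + 206638509316805319*(x-4)^17 + 23082172940374834*(x-4)^18 + 2170186048155268*(x-4)^19 + 169526438549039*(x-4)^20 + 10805141403914*(x-4)^21 + 547554806799*(x-4)^22 + 21222594393*(x-4)^23 + 590930340*(x-4)^24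 + 10525515*(x-4)^25 + 90090*(x-4)^26) / (90090 * (x^14*(x+1)^13)) := by
    simp only [phiuF, philF, psiF, rhoF, SF]
    rw [eq_div_iff (by positivity)]
    field_simp
    ring
  have hnum : (0:ℝ) < 7136581879209960813167 + 41796655156486693900772*(x-4) + 117630671126414925440317*(x-4)^2 + 211772883785718402002817*(x-4)^3 + 273897716144993098764632*(x-4)^4 + 270945177642995126335441*(x-4)^5 + 213098135853235232854306*(x-4)^6 + 136751271459878575909266*(x-4)^7 + 72912855694735789495191*(x-4)^8 + 32721437340899646653886*(x-4)^9 + 12475803563845704063267*(x-4)^10 + 4067914983640307813247*(x-4)^11 + 1139322304430614726357*(x-4)^12 + 274779653305999923073*(x-4)^13 + 57113879951060090225*(x-4)^14 + 10222611593971473425*(x-4)^15 + 1571640361719420954*(x-4)^16 + 206638509316805319*(x-4)^17 + 23082172940374834*(x-4)^18 + 2170186048155268*(x-4)^19 + 169526438549039*(x-4)^20 + 10805141403914*(x-4)^21 + 547554806799*(x-4)^22 + 21222594393*(x-4)^23 + 590930340*(x-4)^24 + 10525515*(x-4)^25 + 90090*(x-4)^26 := by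
    linarith [pow_nonneg ht 2, pow_nonneg ht 3, pow_nonneg ht 4, pow_nonneg ht 5, pow_nonneg ht 6, pow_nonneg ht 7, pow_nonneg ht 8, pow_nonneg ht 9, pow_nonneg ht 10, pow_nonneg ht 11, pow_nonneg ht 12, pow_nonneg ht 13, pow_nonneg ht 14, pow_nonneg ht 15, pow_nonneg ht 16, pow_nonneg ht 17, pow_nonneg ht 18, pow_nonneg ht 19, pow_nonneg ht 20, pow_nonneg ht 21, pow_nonneg ht 22, pow_nonneg ht 23, pow_nonneg ht 24, pow_nonneg ht 25, pow_nonneg ht 26]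
  linarith [key, div_pos hnum (by positivity : (0:ℝ) < 90090 * (x^14*(x+1)^13))]

lemma final_lower {x : ℝ} (hx : 4 ≤ x) :
    1 < (12*(x*(x+1)/2) + 6/5 - 19/(175*(x*(x+1)/2)) + 13/(250*(x*(x+1)/2)^2)) * philF x := by
  have hx0 : (0:ℝ) < x := by linarith
  have hx1 : (0:ℝ) < x - 1 := by linarith
  have hx2 : (0:ℝ) < x + 1 := by linarith
  have ht : (0:ℝ) ≤ x - 4 := by linarith
  have key : (12*(x*(x+1)/2) + 6/5 - 19/(175*(x*(x+1)/2)) + 13/(250*(x*(x+1)/2)^2)) * philF x - 1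
      = (6435307910735691078588 + 34253218809856107139668*(x-4) + 86906807797638963254188*(x-4)^2 + 139939573188648909864988*(x-4)^3 + 160592544528267885781748*(x-4)^4 + 139794460941383142376524*(x-4)^5 + 95908144279274970641404*(x-4)^6 + 53183734050436592586524*(x-4)^7 + 24252154609561229420024*(x-4)^8 + 9203070979375533715104*(x-4)^9 + 2929523738499492123288*(x-4)^10 + 786118130311135182288*(x-4)^11 + 178249099382458577928*(x-4)^12 + 34151334003548606544*(x-4)^13 + 5515599438590460896*(x-4)^14 + 747188249923349960*(x-4)^15 + 84227087306813884*(x-4)^16 + 7807541076714964*(x-4)^17 + 585017318230044*(x-4)^18 + 34556534519388*(x-4)^19 + 1549136883644*(x-4)^20 + 49537196804*(x-4)^21 + 1006761964*(x-4)^22 + 9774388*(x-4)^23) / (45045 * (3500*(x^16*(x+1)^15))) := by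
    simp only [phiuF, philF, psiF, rhoF, SF]
    rw [eq_div_iff (by positivity)]
    field_simp
    ring
  have hnum : (0:ℝ) < 6435307910735691078588 + 34253218809856107139668*(x-4) + 86906807797638963254188*(x-4)^2 + 139939573188648909864988*(x-4)^3 + 160592544528267885781748*(x-4)^4 + 139794460941383142376524*(x-4)^5 + 95908144279274970641404*(x-4)^6 + 53183734050436592586524*(x-4)^7 + 24252154609561229420024*(x-4)^8 + 9203070979375533715104*(x-4)^9 + 2929523738499492123288*(x-4)^10 + 786118130311135182288*(x-4)^11 + 178249099382458577928*(x-4)^12 + 34151334003548606544*(x-4)^13 + 5515599438590460896*(x-4)^14 + 747188249923349960*(x-4)^15 + 84227087306813884*(x-4)^16 + 7807541076714964*(x-4)^17 + 585017318230044*(x-4)^18 + 34556534519388*(x-4)^19 + 1549136883644*(x-4)^20 + 49537196804*(x-4)^21 + 1006761964*(x-4)^22 + 9774388*(x-4)^23 := by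
    linarith [pow_nonneg ht 2, pow_nonneg ht 3, pow_nonneg ht 4, pow_nonneg ht 5, pow_nonneg ht 6, pow_nonneg ht 7, pow_nonneg ht 8, pow_nonneg ht 9, pow_nonneg ht 10, pow_nonneg ht 11, pow_nonneg ht 12, pow_nonneg ht 13, pow_nonneg ht 14, pow_nonneg ht 15, pow_nonneg ht 16, pow_nonneg ht 17, pow_nonneg ht 18, pow_nonneg ht 19, pow_nonneg ht 20, pow_nonneg ht 21, pow_nonneg ht 22, pow_nonneg ht 23]
  linarith [key, div_pos hnum (by positivity : (0:ℝ) < 45045 * (3500*(x^16*(x+1)^15)))]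

lemma final_upper {x : ℝ} (hx : 4 ≤ x) :
    (x*(x+1)/2)^3*(12*(x*(x+1)/2) + 6/5 - 19/(175*(x*(x+1)/2)) + 13/(250*(x*(x+1)/2)^2)) * phiuF x - (x*(x+1)/2)^3 < 187969/4042500 * phiuF x := by
  have hx0 : (0:ℝ) < x := by linarith
  have hx1 : (0:ℝ) < x - 1 := by linarith
  have hx2 : (0:ℝ) < x + 1 := by linarith
  have ht : (0:ℝ) ≤ x - 4 := by linarith
  have key : (187969/4042500 * phiuF x) - ((x*(x+1)/2)^3*(12*(x*(x+1)/2) + 6/5 - 19/(175*(x*(x+1)/2)) + 13/(250*(x*(x+1)/2)^2)) * phiuF x - (x*(x+1)/2)^3)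
      = (15538320729733584742131508 + 77071340213801962148279788*(x-4) + 184521298552623480845576108*(x-4)^2 + 283571278660621609447288908*(x-4)^3 + 313769210996737023375816568*(x-4)^4 + 265772054373794571531998684*(x-4)^5 + 178878514664760759346640264*(x-4)^6 + 98026182656904097489451184*(x-4)^7 + 44466900875020295153814684*(x-4)^8 + 16886935838977373275421964*(x-4)^9 + 5409534926030046229917708*(x-4)^10 + 1468484875146996355177308*(x-4)^11 + 338541488677176628594868*(x-4)^12 + 66272180287880812504412*(x-4)^13 + 10989464393242692931900*(x-4)^14 + 1536045368758867263340*(x-4)^15 + 179543239925559267936*(x-4)^16 + 17344268509560755376*(x-4)^17 + 1361257676908200896*(x-4)^18 + 84654402370664192*(x-4)^19 + 4015761289210396*(x-4)^20 + 136567350013336*(x-4)^21 + 2966163861276*(x-4)^22 + 30919195692*(x-4)^23) / (45045 * (32340000*(x^14*(x+1)^13))) := by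
    simp only [phiuF, philF, psiF, rhoF, SF]
    rw [eq_div_iff (by positivity)]
    field_simp
    ring
  have hnum : (0:ℝ) < 15538320729733584742131508 + 77071340213801962148279788*(x-4) + 184521298552623480845576108*(x-4)^2 + 283571278660621609447288908*(x-4)^3 + 313769210996737023375816568*(x-4)^4 + 265772054373794571531998684*(x-4)^5 + 178878514664760759346640264*(x-4)^6 + 98026182656904097489451184*(x-4)^7 + 44466900875020295153814684*(x-4)^8 + 16886935838977373275421964*(x-4)^9 + 5409534926030046229917708*(x-4)^10 + 1468484875146996355177308*(x-4)^11 + 338541488677176628594868*(x-4)^12 + 66272180287880812504412*(x-4)^13 + 10989464393242692931900*(x-4)^14 + 1536045368758867263340*(x-4)^15 + 179543239925559267936*(x-4)^16 + 17344268509560755376*(x-4)^17 + 1361257676908200896*(x-4)^18 + 84654402370664192*(x-4)^19 + 4015761289210396*(x-4)^20 + 136567350013336*(x-4)^21 + 2966163861276*(x-4)^22 + 30919195692*(x-4)^23 := by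
    linarith [pow_nonneg ht 2, pow_nonneg ht 3, pow_nonneg ht 4, pow_nonneg ht 5, pow_nonneg ht 6, pow_nonneg ht 7, pow_nonneg ht 8, pow_nonneg ht 9, pow_nonneg ht 10, pow_nonneg ht 11, pow_nonneg ht 12, pow_nonneg ht 13, pow_nonneg ht 14, pow_nonneg ht 15, pow_nonneg ht 16, pow_nonneg ht 17, pow_nonneg ht 18, pow_nonneg ht 19, pow_nonneg ht 20, pow_nonneg ht 21, pow_nonneg ht 22, pow_nonneg ht 23]
  linarith [key, div_pos hnum (by positivity : (0:ℝ) < 45045 * (32340000*(x^14*(x+1)^13)))]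

lemma DD_step (k : ℕ) (hk : 1 ≤ k) :
    DD k - DD (k+1) = Real.log (((k:ℝ)+1+1)/((k:ℝ)+1-1))/2 - 1/((k:ℝ)+1) := by
  have hk0 : (0:ℝ) < k := by exact_mod_cast hk
  unfold DD
  rw [harmonic_succ]
  push_cast
  have e1 : Real.log ((k:ℝ)*((k:ℝ)+1)) = Real.log k + Real.log ((k:ℝ)+1) :=
    Real.log_mul hk0.ne' (by linarith)
  have e2 : Real.log (((k:ℝ)+1)*((k:ℝ)+1+1)) = Real.log ((k:ℝ)+1) + Real.log ((k:ℝ)+1+1) :=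
    Real.log_mul (by linarith) (by linarith)
  have e4 : (k:ℝ)+1-1 = (k:ℝ) := by ring
  have e3 : Real.log (((k:ℝ)+1+1)/((k:ℝ)+1-1)) = Real.log ((k:ℝ)+1+1) - Real.log ((k:ℝ)+1-1) :=
    Real.log_div (by linarith) (by rw [e4]; linarith)
  rw [e3, e4, e1, e2]
  ring

lemma DD_tendsto : Tendsto DD atTop (𝓝 0) := by
  have h1 : Tendsto (fun k:ℕ ↦ (harmonic k:ℝ) - Real.log k - Real.eulerMascheroniConstant)
      atTop (𝓝 0) := by
    simpa using Real.tendsto_harmonic_sub_log.sub_const Real.eulerMascheroniConstant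
  have h2 : Tendsto (fun k:ℕ ↦ Real.log (((k:ℝ)+1)/k)) atTop (𝓝 0) := by
    have hq : Tendsto (fun k:ℕ ↦ ((k:ℝ)+1)/k) atTop (𝓝 1) := by
      have h0 : Tendsto (fun k:ℕ ↦ 1 + 1/(k:ℝ)) atTop (𝓝 1) := by
        simpa using (tendsto_one_div_atTop_nhds_zero_nat : Tendsto (fun n : ℕ ↦ 1 / (n:ℝ)) atTop (𝓝 0)).const_add 1
      apply h0.congr'
      filter_upwards [eventually_gt_atTop 0] with k hk
      have hk0 : (0:ℝ) < k := by exact_mod_cast hk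
      field_simp
    simpa using hq.log one_ne_zero
  have h3 := h1.sub (h2.div_const 2)
  rw [show (0:ℝ) - 0/2 = 0 by norm_num] at h3
  apply h3.congr'
  filter_upwards [eventually_gt_atTop 0] with k hk
  have hk0 : (0:ℝ) < k := by exact_mod_cast hk
  unfold DD
  rw [Real.log_div (by linarith) hk0.ne', Real.log_mul hk0.ne' (by linarith)]
  ring

lemma phiu_nonneg {x : ℝ} (hx : 4 ≤ x) : 0 ≤ phiuF x := by
  have h1 := phil_pos hx
  have h2 : 0 ≤ rhoF x := by
    unfold rhoF
    have : (0:ℝ) < x + 1 := by linarith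
    positivity
  unfold philF at h1
  unfold phiuF
  linarith

lemma cast_ge4 (j : ℕ) : (4:ℝ) ≤ (j:ℝ) + 4 := by
  have : (0:ℝ) ≤ (j:ℝ) := Nat.cast_nonneg j
  linarith

lemma phiu_tendsto : Tendsto (fun j:ℕ ↦ phiuF ((j:ℝ)+4)) atTop (𝓝 0) := by
  have hmono : Tendsto (fun j:ℕ ↦ ((j:ℝ)+4)) atTop atTop :=
    tendsto_atTop_add_const_right atTop 4 tendsto_natCast_atTop_atTop
  have hinv : Tendsto (fun j:ℕ ↦ 1/((j:ℝ)+4)) atTop (𝓝 0) := by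
    simpa [one_div, Pi.inv_def] using hmono.inv_tendsto_atTop
  refine tendsto_of_tendsto_of_tendsto_of_le_of_le tendsto_const_nhds hinv ?_ ?_
  · intro j; exact phiu_nonneg (cast_ge4 j)
  · intro j; exact phiu_le (cast_ge4 j)

lemma phil_tendsto : Tendsto (fun j:ℕ ↦ philF ((j:ℝ)+4)) atTop (𝓝 0) := by
  have hmono : Tendsto (fun j:ℕ ↦ ((j:ℝ)+4)) atTop atTop :=
    tendsto_atTop_add_const_right atTop 4 tendsto_natCast_atTop_atTop
  have hinv : Tendsto (fun j:ℕ ↦ 1/((j:ℝ)+4)) atTop (𝓝 0) := by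
    simpa [one_div, Pi.inv_def] using hmono.inv_tendsto_atTop
  refine tendsto_of_tendsto_of_tendsto_of_le_of_le tendsto_const_nhds hinv ?_ ?_
  · intro j; exact (phil_pos (cast_ge4 j)).le
  · intro j
    have h2 : 0 ≤ rhoF ((j:ℝ)+4) := by
      unfold rhoF
      have : (0:ℝ) ≤ (j:ℝ) := Nat.cast_nonneg j
      positivity
    have := phiu_le (cast_ge4 j)
    unfold phiuF at this
    unfold philF
    linarith

lemma DD_sandwich (k : ℕ) (hk : 4 ≤ k) : philF (k:ℝ) ≤ DD k ∧ DD k ≤ phiuF (k:ℝ) := by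
  have hstep : ∀ j : ℕ, DD (j+4) - DD (j+5)
      = Real.log ((((j:ℝ)+4)+1+1)/(((j:ℝ)+4)+1-1))/2 - 1/(((j:ℝ)+4)+1) := by
    intro j
    have h := DD_step (j+4) (by omega)
    have e : j+4+1 = j+5 := rfl
    rw [e] at h
    push_cast at h ⊢
    convert h using 3 <;> ring
  have hx5 : ∀ j : ℕ, (5:ℝ) ≤ (j:ℝ)+5 := by
    intro j
    have : (0:ℝ) ≤ (j:ℝ) := Nat.cast_nonneg j
    linarith
  have hcast : ∀ j : ℕ, ((j:ℝ)+5) - 1 = (j:ℝ)+4 := by intro j; ring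
  -- lower bound
  have hu : ∀ j : ℕ, 0 ≤ DD (j+4) - philF ((j:ℝ)+4) := by
    have hanti : Antitone (fun j : ℕ ↦ DD (j+4) - philF ((j:ℝ)+4)) := by
      apply antitone_nat_of_succ_le
      intro j
      have e1 : j+1+4 = j+5 := by omega
      rw [e1]
      have e2 : ((j+1:ℕ):ℝ) + 4 = (j:ℝ)+5 := by push_cast; ring
      rw [e2]
      have h1 := hstep j
      have hlb := log_bound (x := (j:ℝ)+5) (by linarith [hx5 j])
      rw [abs_le] at hlb
      have hsl := step_lower (x := (j:ℝ)+5) (hx5 j)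
      rw [hcast j] at hsl
      have e3 : (((j:ℝ)+4)+1+1) = ((j:ℝ)+5)+1 := by ring
      have e4 : (((j:ℝ)+4)+1-1) = ((j:ℝ)+5)-1 := by ring
      have e5 : (((j:ℝ)+4)+1) = ((j:ℝ)+5) := by ring
      rw [e3, e4, e5] at h1
      rw [hcast j] at h1 hlb
      linarith [hlb.1, hsl, h1]
    have hlim : Tendsto (fun j : ℕ ↦ DD (j+4) - philF ((j:ℝ)+4)) atTop (𝓝 0) := by
      have hD4 : Tendsto (fun j:ℕ ↦ DD (j+4)) atTop (𝓝 0) :=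
        DD_tendsto.comp (tendsto_add_atTop_nat 4)
      simpa using hD4.sub phil_tendsto
    intro j
    exact hanti.le_of_tendsto hlim j
  -- upper bound
  have hv : ∀ j : ℕ, 0 ≤ phiuF ((j:ℝ)+4) - DD (j+4) := by
    have hanti : Antitone (fun j : ℕ ↦ phiuF ((j:ℝ)+4) - DD (j+4)) := by
      apply antitone_nat_of_succ_le
      intro j
      have e1 : j+1+4 = j+5 := by omega
      rw [e1]
      have e2 : ((j+1:ℕ):ℝ) + 4 = (j:ℝ)+5 := by push_cast; ring
      rw [e2]
      have h1 := hstep j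
      have hlb := log_bound (x := (j:ℝ)+5) (by linarith [hx5 j])
      rw [abs_le] at hlb
      have hsu := step_upper (x := (j:ℝ)+5) (hx5 j)
      rw [hcast j] at hsu
      have e3 : (((j:ℝ)+4)+1+1) = ((j:ℝ)+5)+1 := by ring
      have e4 : (((j:ℝ)+4)+1-1) = ((j:ℝ)+5)-1 := by ring
      have e5 : (((j:ℝ)+4)+1) = ((j:ℝ)+5) := by ring
      rw [e3, e4, e5] at h1
      rw [hcast j] at h1 hlb
      linarith [hlb.2, hsu, h1]
    have hlim : Tendsto (fun j : ℕ ↦ phiuF ((j:ℝ)+4) - DD (j+4)) atTop (𝓝 0) := by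
      have hD4 : Tendsto (fun j:ℕ ↦ DD (j+4)) atTop (𝓝 0) :=
        DD_tendsto.comp (tendsto_add_atTop_nat 4)
      simpa using phiu_tendsto.sub hD4
    intro j
    exact hanti.le_of_tendsto hlim j
  have e6 : ((k-4:ℕ):ℝ) + 4 = (k:ℝ) := by
    have : ((k-4:ℕ):ℝ) = (k:ℝ) - 4 := by
      push_cast [Nat.cast_sub hk]
      ring
    rw [this]; ring
  have e7 : k-4+4 = k := Nat.sub_add_cancel hk
  constructor
  · have := hu (k-4); rw [e6, e7] at this; linarith
  · have := hv (k-4); rw [e6, e7] at this; linarith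

lemma assemble {m Λ δ D l u : ℝ} (hm0 : 0 < m) (hl : l ≤ D) (hu : D ≤ u) (hl0 : 0 < l)
    (hΛ : Λ = 1/D - 12*m) (hδ : δ = m^3*(6/5 - 19/(175*m) + 13/(250*m^2) - Λ))
    (h1 : 1 < (12*m + 6/5 - 19/(175*m) + 13/(250*m^2)) * l)
    (h2 : m^3*(12*m + 6/5 - 19/(175*m) + 13/(250*m^2)) * u - m^3 < 187969/4042500 * u) :
    0 < D ∧ 0 < δ ∧ δ < 187969/4042500 := by
  have hD0 : 0 < D := lt_of_lt_of_le hl0 hl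
  have hu0 : 0 < u := lt_of_lt_of_le hD0 hu
  have hδ' : δ = m^3 * ((12*m + 6/5 - 19/(175*m) + 13/(250*m^2)) - 1/D) := by
    rw [hδ, hΛ]; ring
  have hm3 : (0:ℝ) < m^3 := by positivity
  have hinv1 : 1/D ≤ 1/l := one_div_le_one_div_of_le hl0 hl
  have hinv2 : 1/u ≤ 1/D := one_div_le_one_div_of_le hD0 hu
  have hCl : 1/l < (12*m + 6/5 - 19/(175*m) + 13/(250*m^2)) := by
    rw [div_lt_iff₀ hl0]; linarith
  refine ⟨hD0, ?_, ?_⟩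
  · rw [hδ']
    apply mul_pos hm3
    linarith
  · have hkey : m^3 * ((12*m + 6/5 - 19/(175*m) + 13/(250*m^2)) - 1/u) < 187969/4042500 := by
      rw [show m^3 * ((12*m + 6/5 - 19/(175*m) + 13/(250*m^2)) - 1/u)
          = (m^3*(12*m + 6/5 - 19/(175*m) + 13/(250*m^2))*u - m^3)/u by field_simp]
      rw [div_lt_iff₀ hu0]
      linarith
    have hmono : m^3 * ((12*m + 6/5 - 19/(175*m) + 13/(250*m^2)) - 1/D)
        ≤ m^3 * ((12*m + 6/5 - 19/(175*m) + 13/(250*m^2)) - 1/u) := by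
      apply mul_le_mul_of_nonneg_left _ hm3.le
      linarith
    rw [hδ']
    linarith

lemma DD_small :
    ((13664341/1000000000 : ℝ) ≤ DD 3 ∧ DD 3 ≤ 6832173/500000000)
    ∧ ((3363061/125000000 : ℝ) ≤ DD 2 ∧ DD 2 ≤ 26904703/1000000000)
    ∧ ((9518373/125000000 : ℝ) ≤ DD 1 ∧ DD 1 ≤ 7626927/100000000) := by
  obtain ⟨h4l, h4u⟩ := DD_sandwich 4 (le_refl 4)
  norm_num at h4l h4u
  have p4 : (8251531/1000000000:ℝ) ≤ philF 4 := by
    unfold philF psiF rhoF; norm_num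
  have q4 : phiuF 4 ≤ (2062883/250000000:ℝ) := by
    unfold phiuF psiF rhoF; norm_num
  -- step k=3 : x = 4
  have hs3 := DD_step 3 (by norm_num)
  have hb3 := log_bound (x := 4) (by norm_num)
  rw [abs_le] at hb3
  have eS4 : SF 4 = 772092185209/3022918778880 := by unfold SF; norm_num
  rw [eS4] at hb3
  norm_num at hs3 hb3
  have hDD3 : (13664341/1000000000 : ℝ) ≤ DD 3 ∧ DD 3 ≤ 6832173/500000000 := by
    constructor <;> linarith [hb3.1, hb3.2, hs3, h4l, h4u, p4, q4]
  -- step k=2 : x = 3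
  have hs2 := DD_step 2 (by norm_num)
  have hb2 := log_bound (x := 3) (by norm_num)
  rw [abs_le] at hb2
  have eS3 : SF 3 = 2765513941/7979586615 := by unfold SF; norm_num
  rw [eS3] at hb2
  norm_num at hs2 hb2
  have hDD2 : (3363061/125000000 : ℝ) ≤ DD 2 ∧ DD 2 ≤ 26904703/1000000000 := by
    constructor <;> linarith [hb2.1, hb2.2, hs2, hDD3.1, hDD3.2]
  -- step k=1 : x = 2
  have hs1 := DD_step 1 (by norm_num)
  have hb1 := log_bound (x := 2) (by norm_num)
  rw [abs_le] at hb1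
  have eS2 : SF 2 = 202697749/369008640 := by unfold SF; norm_num
  rw [eS2] at hb1
  norm_num at hs1 hb1
  have hDD1 : (9518373/125000000 : ℝ) ≤ DD 1 ∧ DD 1 ≤ 7626927/100000000 := by
    constructor <;> linarith [hb1.1, hb1.2, hs1, hDD2.1, hDD2.2]
  exact ⟨hDD3, hDD2, hDD1⟩

/-- Lodge's second approximation: with `Λₙ := 1/(Hₙ − (1/2)ln(2m) − γ) − 12m`
(well defined since `Hₙ − (1/2)ln(2m) − γ > 0`), the number
`δₙ := m³·(6/5 − 19/(175m) + 13/(250m²) − Λₙ)` satisfies `0 < δₙ < 187969/4042500`. -/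
theorem lodge_second_approximation (n : ℕ) (hn : 0 < n)
    (m : ℝ) (hm : m = n * (n + 1) / 2)
    (Λ : ℝ) (hΛ : Λ = 1 / ((harmonic n : ℝ) - (1 / 2) * Real.log (2 * m)
      - Real.eulerMascheroniConstant) - 12 * m)
    (δ : ℝ) (hδ : δ = m ^ 3 * (6 / 5 - 19 / (175 * m) + 13 / (250 * m ^ 2) - Λ)) :
    0 < (harmonic n : ℝ) - (1 / 2) * Real.log (2 * m) - Real.eulerMascheroniConstant ∧
      0 < δ ∧ δ < 187969 / 4042500 := by
  obtain ⟨hD3, hD2, hD1⟩ := DD_small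
  rcases Nat.lt_or_ge n 4 with h4 | h4
  · interval_cases n
    · -- n = 1
      have hm1 : m = 1 := by rw [hm]; norm_num
      subst hm1
      have hD : (harmonic 1 : ℝ) - (1 / 2) * Real.log (2 * 1) - Real.eulerMascheroniConstant
          = DD 1 := by
        unfold DD; push_cast; norm_num; ring
      rw [hD] at hΛ ⊢
      exact assemble (by norm_num) hD1.1 hD1.2 (by norm_num) hΛ hδ (by norm_num) (by norm_num)
    · -- n = 2
      have hm1 : m = 3 := by rw [hm]; norm_num
      subst hm1
      have hD : (harmonic 2 : ℝ) - (1 / 2) * Real.log (2 * 3) - Real.eulerMascheroniConstant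
          = DD 2 := by
        unfold DD; push_cast; norm_num; ring
      rw [hD] at hΛ ⊢
      exact assemble (by norm_num) hD2.1 hD2.2 (by norm_num) hΛ hδ (by norm_num) (by norm_num)
    · -- n = 3
      have hm1 : m = 6 := by rw [hm]; norm_num
      subst hm1
      have hD : (harmonic 3 : ℝ) - (1 / 2) * Real.log (2 * 6) - Real.eulerMascheroniConstant
          = DD 3 := by
        unfold DD; push_cast; norm_num; ring
      rw [hD] at hΛ ⊢
      exact assemble (by norm_num) hD3.1 hD3.2 (by norm_num) hΛ hδ (by norm_num) (by norm_num)
  · -- n ≥ 4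
    have hx : (4:ℝ) ≤ (n:ℝ) := by exact_mod_cast h4
    have h2m : 2*m = (n:ℝ)*((n:ℝ)+1) := by rw [hm]; ring
    have hD : (harmonic n : ℝ) - (1 / 2) * Real.log (2 * m) - Real.eulerMascheroniConstant
        = DD n := by
      unfold DD; rw [← h2m]; ring
    rw [hD] at hΛ ⊢
    obtain ⟨hl, hu⟩ := DD_sandwich n h4
    have hm0 : 0 < m := by rw [hm]; nlinarith
    have hmx : m = (n:ℝ)*((n:ℝ)+1)/2 := by rw [hm]
    have h1 := final_lower hx
    rw [← hmx] at h1
    have h2 := final_upper hx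
    rw [← hmx] at h2
    exact assemble hm0 hl hu (phil_pos hx) hΛ hδ h1 h2
end
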